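/- arXiv:2007.15834 — 4 statements merged into one kernel-verified Lean document; each statement's English description precedes it below -/
import Mathlib

section
/- Let γ > 0 and 0 < c₀ ≤ C₀. There exist γ′ > γ and R > e such that for every sequence (a_k)_{k≥1} of reals with a_1 ≥ R and c₀·a_k·(log a_k)^γ ≤ a_{k+1} ≤ C₀·a_k·(log a_k)^γ for all k ≥ 1, there exist constants 0 < c ≤ C with c·n^{γn} ≤ a_n ≤ C·n^{γ′n} for all n ≥ 1. -/
/-!
Write `ℓ_k = log a_k`. Taking logarithms, the recurrence becomes
`ℓ_{k+1} = ℓ_k + γ log ℓ_k + O(1)`, so both bounds are inductions on `ℓ`.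

For the lower bound the profile `γ k log k + D` increases by at most `γ (log (k + 1) + 1)`,
while `log c₀ + γ log ℓ_k ≥ γ (log (k + 1) + 1)` as soon as `ℓ_k ≥ K (k + 1)` with
`K = e · c₀^(-1/γ)`; a large `D` makes the profile dominate `K (k + 1)` because
`x log x ≥ M x - e^(M-1)` for every `M`.

For the upper bound the profile `3γ k log (k + m) + ℓ_1` is at most `(3γ + 1) (k + m)²`, so
`γ log ℓ_k ≤ 2γ log (k + m) + O(1)`, which the extra factor `3` absorbs once `m` is large.
Finally `n log (n + m) ≤ n log n + m` turns `log (n + m)` back into `log n`.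
-/

open Real

lemma mul_log_add_le {x y : ℝ} (hx : 0 < x) (hy : 0 ≤ y) :
    x * log (x + y) ≤ x * log x + y := by
  have hxy : 0 < x + y := by linarith
  have h := log_le_sub_one_of_pos (div_pos hxy hx)
  rw [log_div hxy.ne' hx.ne'] at h
  have : x * (log (x + y) - log x) ≤ x * ((x + y) / x - 1) := mul_le_mul_of_nonneg_left h hx.le
  rw [show x * ((x + y) / x - 1) = y by field_simp; ring] at this
  linarith

lemma sub_exp_le_mul_log (M : ℝ) {x : ℝ} (hx : 0 < x) :
    M * x - exp (M - 1) ≤ x * log x := by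
  have h := one_sub_inv_le_log_of_pos (div_pos hx (exp_pos (M - 1)))
  rw [inv_div, log_div hx.ne' (exp_pos _).ne', log_exp] at h
  have : x * (1 - exp (M - 1) / x) ≤ x * (log x - (M - 1)) := mul_le_mul_of_nonneg_left h hx.le
  rw [mul_sub, mul_div_cancel₀ _ hx.ne'] at this
  linarith

lemma log_mul_mul_log_rpow (γ : ℝ) {t x : ℝ} (ht : 0 < t) (hx : 1 < x) :
    log (t * x * log x ^ γ) = log t + log x + γ * log (log x) := by
  have hlog : 0 < log x := log_pos hx
  rw [log_mul (by positivity) (rpow_pos_of_pos hlog γ).ne', log_mul ht.ne' (by linarith),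
    log_rpow hlog]

lemma log_lower_bound_of_recurrence {γ c₀ D : ℝ} {a : ℕ → ℝ} (hγ : 0 < γ) (hc₀ : 0 < c₀)
    (hD : γ * exp (2 * exp (1 - log c₀ / γ) / γ - 1) ≤ D) (ha₁ : exp D ≤ a 1)
    (hrec : ∀ k ≥ 1, c₀ * a k * log (a k) ^ γ ≤ a (k + 1)) :
    ∀ n ≥ 1, 0 < a n ∧ γ * n * log n + D ≤ log (a n) := by
  set K := exp (1 - log c₀ / γ) with hK
  have hK_pos : 0 < K := exp_pos _
  have hprofile : ∀ x : ℝ, 1 ≤ x → K * (x + 1) ≤ γ * x * log x + D := by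
    intro x hx
    have h := mul_le_mul_of_nonneg_left (sub_exp_le_mul_log (2 * K / γ) (by linarith : 0 < x))
      hγ.le
    rw [mul_sub, ← mul_assoc, mul_div_cancel₀ _ hγ.ne'] at h
    nlinarith
  intro n hn
  induction n, hn using Nat.le_induction with
  | base =>
    refine ⟨(exp_pos D).trans_le ha₁, ?_⟩
    simpa using (le_log_iff_exp_le ((exp_pos D).trans_le ha₁)).2 ha₁
  | succ k hk ih =>
    obtain ⟨hak, hlo⟩ := ih
    have hk1 : (1 : ℝ) ≤ k := by exact_mod_cast hk
    have hKℓ : K * (k + 1) ≤ log (a k) := (hprofile k hk1).trans hlo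
    have hℓ : 0 < log (a k) := lt_of_lt_of_le (by positivity) hKℓ
    have hak1 : 1 < a k := (log_pos_iff hak.le).1 hℓ
    have hprod : 0 < c₀ * a k * log (a k) ^ γ := by
      have := rpow_pos_of_pos hℓ γ
      positivity
    have hstep : log c₀ + log (a k) + γ * log (log (a k)) ≤ log (a (k + 1)) := by
      rw [← log_mul_mul_log_rpow γ hc₀ hak1]
      exact log_le_log hprod (hrec k hk)
    have hloglog : γ * (1 - log c₀ / γ + log (k + 1)) ≤ γ * log (log (a k)) := by
      refine mul_le_mul_of_nonneg_left ?_ hγ.le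
      have := log_le_log (by positivity) hKℓ
      rwa [log_mul hK_pos.ne' (by positivity), hK, log_exp] at this
    rw [mul_add, mul_sub, mul_div_cancel₀ _ hγ.ne'] at hloglog
    have hincr := mul_log_add_le (by linarith : (0 : ℝ) < k) zero_le_one
    refine ⟨hprod.trans_le (hrec k hk), ?_⟩
    push_cast
    nlinarith

lemma log_upper_bound_of_recurrence {γ C₀ m : ℝ} {a : ℕ → ℝ} (hγ : 0 < γ) (hC₀ : 0 < C₀)
    (ha : ∀ k ≥ 1, 1 < a k) (hm₁ : log (a 1) ≤ m) (hm₂ : (3 * γ + 1) * exp (log C₀ / γ) ≤ m)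
    (hrec : ∀ k ≥ 1, a (k + 1) ≤ C₀ * a k * log (a k) ^ γ) :
    ∀ n ≥ 1, log (a n) ≤ 3 * γ * n * log (n + m) + log (a 1) := by
  have hm : 0 < m := lt_of_lt_of_le (by positivity) hm₂
  intro n hn
  induction n, hn using Nat.le_induction with
  | base =>
    have : 0 ≤ log (1 + m) := log_nonneg (by linarith)
    push_cast
    nlinarith
  | succ k hk ih =>
    have hk1 : (1 : ℝ) ≤ k := by exact_mod_cast hk
    have hkm : 1 ≤ (k : ℝ) + m := by linarith
    have hℓ : 0 < log (a k) := log_pos (ha k hk)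
    have hstep : log (a (k + 1)) ≤ log C₀ + log (a k) + γ * log (log (a k)) := by
      rw [← log_mul_mul_log_rpow γ hC₀ (ha k hk)]
      exact log_le_log (by linarith [ha (k + 1) (by omega)]) (hrec k hk)
    have hℓ_sq : log (a k) ≤ (3 * γ + 1) * (k + m) ^ 2 := by
      have h₁ : log (k + m) ≤ k + m := log_le_self (by linarith)
      have h₂ : (k : ℝ) * log (k + m) ≤ (k + m) ^ 2 := by
        nlinarith [log_nonneg hkm]
      nlinarith
    have hloglog : log (log (a k)) ≤ log (3 * γ + 1) + 2 * log (k + m) := by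
      have := log_le_log hℓ hℓ_sq
      rwa [log_mul (by positivity) (by positivity), log_pow, Nat.cast_ofNat] at this
    have hm_log : γ * (log (3 * γ + 1) + log C₀ / γ) ≤ γ * log (k + m) := by
      refine mul_le_mul_of_nonneg_left ?_ hγ.le
      rw [← log_exp (log C₀ / γ), ← log_mul (by positivity) (exp_pos _).ne']
      exact log_le_log (by positivity) (by linarith)
    rw [mul_add, mul_div_cancel₀ _ hγ.ne'] at hm_log
    have hmono : log (k + m) ≤ log (k + 1 + m) := log_le_log (by linarith) (by linarith)
    have h₁ := mul_le_mul_of_nonneg_left hloglog hγ.le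
    have h₂ := mul_le_mul_of_nonneg_left hmono (by positivity : 0 ≤ 3 * γ * ((k : ℝ) + 1))
    push_cast
    linarith

/-- For `γ > 0` and `0 < c₀ ≤ C₀` there exist `γ' > γ` and `R > e` such that
any sequence with `a 1 ≥ R` and `c₀·a_k·(log a_k)^γ ≤ a_{k+1} ≤ C₀·a_k·(log a_k)^γ`
satisfies `c·n^(γn) ≤ a_n ≤ C·n^(γ'n)` for some `0 < c ≤ C` and all `n ≥ 1`. -/
theorem stmt_9 (γ c₀ C₀ : ℝ) (hγ : 0 < γ) (hc₀ : 0 < c₀) (hc₀C₀ : c₀ ≤ C₀) :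
    ∃ γ' : ℝ, γ < γ' ∧ ∃ R : ℝ, Real.exp 1 < R ∧
      ∀ a : ℕ → ℝ, R ≤ a 1 →
        (∀ k ≥ 1, c₀ * a k * Real.log (a k) ^ γ ≤ a (k + 1) ∧
                  a (k + 1) ≤ C₀ * a k * Real.log (a k) ^ γ) →
        ∃ c C : ℝ, 0 < c ∧ c ≤ C ∧
          ∀ n : ℕ, 1 ≤ n →
            c * (n : ℝ) ^ (γ * n) ≤ a n ∧ a n ≤ C * (n : ℝ) ^ (γ' * n) := by
  set D := γ * exp (2 * exp (1 - log c₀ / γ) / γ - 1) + 1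
  have hD : 1 < D := by have := exp_pos (2 * exp (1 - log c₀ / γ) / γ - 1); nlinarith
  refine ⟨3 * γ, by linarith, exp D, exp_lt_exp.2 hD, fun a ha₁ hrec => ?_⟩
  have lower := log_lower_bound_of_recurrence hγ hc₀ (le_add_of_nonneg_right zero_le_one) ha₁
    fun k hk => (hrec k hk).1
  have ha : ∀ k ≥ 1, 1 < a k := fun k hk => by
    obtain ⟨hpos, hlo⟩ := lower k hk
    have : 0 ≤ γ * k * log k := by
      have := log_nonneg (show (1 : ℝ) ≤ k by exact_mod_cast hk)
      positivity
    exact (log_pos_iff hpos.le).1 (by linarith)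
  have hD_le : D ≤ log (a 1) := by simpa using (lower 1 le_rfl).2
  set m := log (a 1) + (3 * γ + 1) * exp (log C₀ / γ)
  have hm : log (a 1) ≤ m := le_add_of_nonneg_right (by positivity)
  have upper := log_upper_bound_of_recurrence hγ (hc₀.trans_le hc₀C₀) ha hm
    (le_add_of_nonneg_left (by linarith)) fun k hk => (hrec k hk).2
  refine ⟨exp D, exp (3 * γ * m + log (a 1)), exp_pos D, exp_le_exp.2 (by nlinarith), ?_⟩
  intro n hn
  have hn₀ : (0 : ℝ) < n := by exact_mod_cast hn
  obtain ⟨hpos, hlo⟩ := lower n hn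
  rw [rpow_def_of_pos hn₀, rpow_def_of_pos hn₀, ← exp_add, ← exp_add, ← exp_log hpos]
  have hshift := mul_le_mul_of_nonneg_left (mul_log_add_le hn₀ (by linarith : 0 ≤ m))
    (by positivity : 0 ≤ 3 * γ)
  constructor
  · exact exp_le_exp.2 (by linarith)
  · exact exp_le_exp.2 (by linarith [upper n hn])
end

section
/- Let γ > 0 and 0 < c₀ ≤ C₀. There exists R > e such that for every sequence (a_k)_{k≥1} of reals with a_1 ≥ R and c₀·a_k·(log a_k)^γ ≤ a_{k+1} ≤ C₀·a_k·(log a_k)^γ for all k ≥ 1, there exist constants 0 < c ≤ C and n₀ ≥ 2 such that for all n ≥ n₀: c·n·log n ≤ log a_n ≤ C·n·log n and c·log n ≤ log(log a_n) ≤ C·log n. -/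
/-!
Write `b k = log a_k`. Taking logarithms in the recurrence, once `log a_1` is large the increments
`b (k+1) - b k` lie between `max 1 ((γ/2) log b_k)` and `(γ+1) log b_k`. Hence `b n ≥ n`, so the
increments are `≳ log n` and `b n ≳ n log n`. Conversely `b n ≤ A n log n` propagates by induction
as soon as `(γ+1) log (A n log n) ≤ A log n`, which holds for large `A` because `log A = o(A)`.
Taking logarithms once more, `log n ≤ log b n ≤ log A + 2 log n`.
-/

open Real Filter

lemma add_one_mul_log_add_one_le {x : ℝ} (hx : 2 ≤ x) :
    (x + 1) * log (x + 1) ≤ x * log x + 4 * log x := by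
  have hx0 : 0 < x := by linarith
  have hlog_succ : log (x + 1) ≤ log x + 1 / x := by
    have h := log_le_sub_one_of_pos (show 0 < (x + 1) / x by positivity)
    rw [log_div (by linarith) hx0.ne', add_div, div_self hx0.ne'] at h
    linarith
  have hlog2 : log 2 ≤ log x := log_le_log (by norm_num) hx
  have hfrac : (x + 1) / x ≤ 3 / 2 := by rw [div_le_iff₀ hx0]; linarith
  calc (x + 1) * log (x + 1) ≤ (x + 1) * (log x + 1 / x) := by gcongr
    _ = x * log x + log x + (x + 1) / x := by field_simp
    _ ≤ x * log x + 4 * log x := by linarith [log_two_gt_d9]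

lemma log_mul_mul_log_le {A x : ℝ} (hA : 0 < A) (hx : 1 < x) :
    log (A * x * log x) ≤ log A + 2 * log x := by
  have hlx : 0 < log x := log_pos hx
  rw [log_mul (by positivity) hlx.ne', log_mul hA.ne' (by positivity)]
  linarith [log_le_self hlx.le]

lemma log_mul_mul_rpow_log {c x γ : ℝ} (hc : 0 < c) (hx : 0 < x) (hlx : 0 < log x) :
    log (c * x * log x ^ γ) = log c + log x + γ * log (log x) := by
  rw [log_mul (by positivity) (by positivity), log_mul hc.ne' hx.ne', log_rpow hlx]

lemma log_sub_log_bounds {γ c C x y : ℝ} (hc : 0 < c) (hC : 0 < C) (hx : 0 < x)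
    (hlx : 0 < log x) (hlo : c * x * log x ^ γ ≤ y) (hhi : y ≤ C * x * log x ^ γ) :
    0 < y ∧ log c + γ * log (log x) ≤ log y - log x ∧
      log y - log x ≤ log C + γ * log (log x) := by
  have hy : 0 < y := lt_of_lt_of_le (by positivity) hlo
  have hlo' := log_le_log (by positivity) hlo
  have hhi' := log_le_log hy hhi
  rw [log_mul_mul_rpow_log hc hx hlx] at hlo'
  rw [log_mul_mul_rpow_log hC hx hlx] at hhi'
  exact ⟨hy, by linarith, by linarith⟩

lemma eventually_increment_bounds {γ : ℝ} (hγ : 0 < γ) (c C : ℝ) :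
    ∀ᶠ L in atTop, 1 ≤ γ / 2 * log L ∧ γ / 2 * log L ≤ log c + γ * log L ∧
      log C + γ * log L ≤ (γ + 1) * log L := by
  filter_upwards [tendsto_log_atTop.eventually_ge_atTop (2 / γ),
    tendsto_log_atTop.eventually_ge_atTop (-2 * log c / γ),
    tendsto_log_atTop.eventually_ge_atTop (log C)] with L h₁ h₂ h₃
  rw [div_le_iff₀ hγ] at h₁ h₂
  exact ⟨by linarith, by linarith, by linarith⟩

section Increments

variable {b : ℕ → ℝ} {m M : ℝ}

lemma natCast_le_of_add_one_le (hb1 : 1 ≤ b 1) (hone : ∀ k ≥ 1, b k + 1 ≤ b (k + 1)) :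
    ∀ n : ℕ, 1 ≤ n → (n : ℝ) ≤ b n := by
  intro n hn
  induction n, hn using Nat.le_induction with
  | base => simpa using hb1
  | succ k hk ih => push_cast; linarith [hone k hk]

lemma exists_pos_mul_mul_log_le (hm : 0 < m) (hb1 : 1 ≤ b 1)
    (hone : ∀ k ≥ 1, b k + 1 ≤ b (k + 1))
    (hlow : ∀ k ≥ 1, b k + m * log (b k) ≤ b (k + 1)) :
    ∃ ε, 0 < ε ∧ ∀ n : ℕ, 2 ≤ n → ε * n * log n ≤ b n := by
  have hnat := natCast_le_of_add_one_le hb1 hone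
  have hb2 : (2 : ℝ) ≤ b 2 := by exact_mod_cast hnat 2 (by norm_num)
  have hlog2 : 0 < log 2 := log_pos (by norm_num)
  set ε := min (m / 4) (b 2 / (2 * log 2))
  refine ⟨ε, lt_min (by positivity) (by positivity), fun n hn => ?_⟩
  induction n, hn using Nat.le_induction with
  | base =>
    have h := (le_div_iff₀ (by positivity)).1 (min_le_right (m / 4) (b 2 / (2 * log 2)))
    push_cast
    linarith
  | succ k hk ih =>
    have hk2 : (2 : ℝ) ≤ k := by exact_mod_cast hk
    have hlogk : 0 ≤ log k := log_nonneg (by linarith)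
    have hlogb : log k ≤ log (b k) := log_le_log (by linarith) (hnat k (by omega))
    have hε : 4 * ε ≤ m := by linarith [min_le_left (m / 4) (b 2 / (2 * log 2))]
    have hε0 : 0 ≤ ε := by positivity
    push_cast
    calc ε * (k + 1) * log (k + 1) ≤ ε * (k * log k + 4 * log k) := by
          rw [mul_assoc]; gcongr; exact add_one_mul_log_add_one_le hk2
      _ ≤ ε * k * log k + m * log (b k) := by nlinarith
      _ ≤ b (k + 1) := by linarith [hlow k (by omega)]

lemma exists_le_mul_mul_log (hM : 0 < M) (hb1 : 1 ≤ b 1)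
    (hone : ∀ k ≥ 1, b k + 1 ≤ b (k + 1))
    (hup : ∀ k ≥ 1, b (k + 1) ≤ b k + M * log (b k)) :
    ∃ A, 0 < A ∧ ∀ n : ℕ, 2 ≤ n → b n ≤ A * n * log n := by
  have hnat := natCast_le_of_add_one_le hb1 hone
  have hlog2 : 0 < log 2 := log_pos (by norm_num)
  have hlogA : ∀ᶠ A in atTop, M * log A ≤ A / 2 * log 2 := by
    filter_upwards [isLittleO_log_id_atTop.bound (show 0 < log 2 / (2 * M) by positivity),
      eventually_ge_atTop 0] with A h hA
    rw [norm_eq_abs, norm_eq_abs, id, abs_of_nonneg hA] at h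
    have := mul_le_mul_of_nonneg_left ((le_abs_self _).trans h) hM.le
    field_simp at this ⊢
    linarith
  obtain ⟨A, ⟨hA0, hAM⟩, hMlogA, hAb2⟩ := (((eventually_gt_atTop 0).and
    (eventually_ge_atTop (4 * M))).and (hlogA.and
      (eventually_ge_atTop (b 2 / (2 * log 2))))).exists
  refine ⟨A, hA0, fun n hn => ?_⟩
  induction n, hn using Nat.le_induction with
  | base =>
    have h := (div_le_iff₀ (by positivity)).1 hAb2
    push_cast
    linarith
  | succ k hk ih =>
    have hk2 : (2 : ℝ) ≤ k := by exact_mod_cast hk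
    have hlogk : log 2 ≤ log k := log_le_log (by norm_num) hk2
    have hbk : 0 < b k := by linarith [hnat k (by omega)]
    have hincr : M * log (b k) ≤ A * log k := by
      calc M * log (b k) ≤ M * (log A + 2 * log k) := by
            gcongr
            exact (log_le_log hbk ih).trans (log_mul_mul_log_le hA0 (by linarith))
        _ ≤ A * log k := by nlinarith
    push_cast
    calc b (k + 1) ≤ A * k * log k + A * log k := by linarith [hup k (by omega)]
      _ = A * (k + 1) * log k := by ring
      _ ≤ A * (k + 1) * log (k + 1) := by gcongr; linarith

lemma exists_mul_log_bounds_of_increments (hm : 0 < m) (hM : 0 < M) (hb1 : 1 ≤ b 1)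
    (hone : ∀ k ≥ 1, b k + 1 ≤ b (k + 1))
    (hlow : ∀ k ≥ 1, b k + m * log (b k) ≤ b (k + 1))
    (hup : ∀ k ≥ 1, b (k + 1) ≤ b k + M * log (b k)) :
    ∃ c C : ℝ, ∃ n₀ : ℕ, 0 < c ∧ c ≤ C ∧ 2 ≤ n₀ ∧ ∀ n : ℕ, n₀ ≤ n →
      (c * n * log n ≤ b n ∧ b n ≤ C * n * log n) ∧
      (c * log n ≤ log (b n) ∧ log (b n) ≤ C * log n) := by
  obtain ⟨ε, hε, hlower⟩ := exists_pos_mul_mul_log_le hm hb1 hone hlow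
  obtain ⟨A, hA, hupper⟩ := exists_le_mul_mul_log hM hb1 hone hup
  refine ⟨min ε 1, max A 3, max 2 ⌈A⌉₊, lt_min hε one_pos,
    (min_le_right _ _).trans (by simp), le_max_left _ _, fun n hn => ?_⟩
  have hn2 : 2 ≤ n := le_of_max_le_left hn
  have hAn : A ≤ n := (Nat.le_ceil A).trans (by exact_mod_cast le_of_max_le_right hn)
  have hn1 : (1 : ℝ) < n := by exact_mod_cast hn2
  have hlogn : 0 < log n := log_pos hn1
  have hnlogn : 0 ≤ (n : ℝ) * log n := by positivity
  have hbn : (n : ℝ) ≤ b n := natCast_le_of_add_one_le hb1 hone n (by omega)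
  have hlow_n := hlower n hn2
  have hup_n := hupper n hn2
  have hc : min ε 1 * log n ≤ log n := by
    nlinarith [min_le_right ε 1]
  refine ⟨⟨?_, ?_⟩, ⟨?_, ?_⟩⟩
  · nlinarith [min_le_left ε 1]
  · nlinarith [le_max_left A 3]
  · exact hc.trans (log_le_log (by positivity) hbn)
  · calc log (b n) ≤ log A + 2 * log n :=
          (log_le_log (by linarith) hup_n).trans (log_mul_mul_log_le hA hn1)
      _ ≤ 3 * log n := by linarith [log_le_log hA hAn]
      _ ≤ max A 3 * log n := by gcongr; exact le_max_right A 3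

end Increments

lemma log_increment_bounds_of_recurrence {γ c₀ C₀ B : ℝ} {a : ℕ → ℝ} (hc₀ : 0 < c₀)
    (hC₀ : 0 < C₀) (hB1 : 1 < B)
    (hB : ∀ L ≥ B, 1 ≤ γ / 2 * log L ∧ γ / 2 * log L ≤ log c₀ + γ * log L ∧
      log C₀ + γ * log L ≤ (γ + 1) * log L)
    (ha1 : 0 < a 1) (hlog1 : B ≤ log (a 1))
    (hrec : ∀ k ≥ 1, c₀ * a k * log (a k) ^ γ ≤ a (k + 1) ∧
      a (k + 1) ≤ C₀ * a k * log (a k) ^ γ) :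
    ∀ k ≥ 1, log (a k) + 1 ≤ log (a (k + 1)) ∧
      log (a k) + γ / 2 * log (log (a k)) ≤ log (a (k + 1)) ∧
      log (a (k + 1)) ≤ log (a k) + (γ + 1) * log (log (a k)) := by
  have hstep : ∀ k ≥ 1, 0 < a k → B ≤ log (a k) → 0 < a (k + 1) ∧
      log (a k) + 1 ≤ log (a (k + 1)) ∧
      log (a k) + γ / 2 * log (log (a k)) ≤ log (a (k + 1)) ∧
      log (a (k + 1)) ≤ log (a k) + (γ + 1) * log (log (a k)) := by
    intro k hk hak hBk
    obtain ⟨hpos, hlo, hhi⟩ :=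
      log_sub_log_bounds hc₀ hC₀ hak (by linarith) (hrec k hk).1 (hrec k hk).2
    obtain ⟨h₁, h₂, h₃⟩ := hB _ hBk
    exact ⟨hpos, by linarith, by linarith, by linarith⟩
  have hinv : ∀ k ≥ 1, 0 < a k ∧ B ≤ log (a k) := by
    intro k hk
    induction k, hk using Nat.le_induction with
    | base => exact ⟨ha1, hlog1⟩
    | succ k hk ih =>
      obtain ⟨hpos, hone, -⟩ := hstep k hk ih.1 ih.2
      exact ⟨hpos, by linarith [ih.2]⟩
  exact fun k hk => (hstep k hk (hinv k hk).1 (hinv k hk).2).2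

/-- For `γ > 0` and `0 < c₀ ≤ C₀` there exists `R > e` such that any
sequence with `a 1 ≥ R` and `c₀·a_k·(log a_k)^γ ≤ a_{k+1} ≤ C₀·a_k·(log a_k)^γ`
satisfies, for some `0 < c ≤ C` and `n₀ ≥ 2`, for all `n ≥ n₀`:
`c·n·log n ≤ log a_n ≤ C·n·log n` and `c·log n ≤ log log a_n ≤ C·log n`. -/
theorem stmt_10 (γ c₀ C₀ : ℝ) (hγ : 0 < γ) (hc₀ : 0 < c₀) (hc₀C₀ : c₀ ≤ C₀) :
    ∃ R : ℝ, Real.exp 1 < R ∧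
      ∀ a : ℕ → ℝ, R ≤ a 1 →
        (∀ k ≥ 1, c₀ * a k * Real.log (a k) ^ γ ≤ a (k + 1) ∧
                  a (k + 1) ≤ C₀ * a k * Real.log (a k) ^ γ) →
        ∃ c C : ℝ, ∃ n₀ : ℕ, 0 < c ∧ c ≤ C ∧ 2 ≤ n₀ ∧
          ∀ n : ℕ, n₀ ≤ n →
            (c * n * Real.log n ≤ Real.log (a n) ∧
             Real.log (a n) ≤ C * n * Real.log n) ∧
            (c * Real.log n ≤ Real.log (Real.log (a n)) ∧
             Real.log (Real.log (a n)) ≤ C * Real.log n) := by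
  obtain ⟨B, hB⟩ := eventually_atTop.1
    ((eventually_increment_bounds hγ c₀ C₀).and (eventually_gt_atTop 1))
  have hB1 : 1 < B := (hB B le_rfl).2
  refine ⟨exp B, exp_lt_exp.2 hB1, fun a ha1 hrec => ?_⟩
  have ha1pos : 0 < a 1 := (exp_pos B).trans_le ha1
  have hlog1 : B ≤ log (a 1) := by simpa using log_le_log (exp_pos B) ha1
  have hincr := log_increment_bounds_of_recurrence hc₀ (hc₀.trans_le hc₀C₀) hB1
    (fun L hL => (hB L hL).1) ha1pos hlog1 hrec
  exact exists_mul_log_bounds_of_increments (b := fun k => log (a k)) (by positivity) (by positivity)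
    (by linarith) (fun k hk => (hincr k hk).1) (fun k hk => (hincr k hk).2.1)
    (fun k hk => (hincr k hk).2.2)
end

section
/- Fix real numbers α > 2 and 0 < β < 2. Let (a_k), (b_k), (c_k), (d_k), k ≥ 1, be sequences of reals with e² < a_1 and a_k ≤ b_k < c_k ≤ d_k < a_{k+1} for all k, satisfying b_k = c_k/(log c_k)^{1/(α−2)} and a_{k+1} = d_k (log d_k)^{1/(2−β)}. Define V : (0,∞) → ℝ by V(r) = 2π r² if 0 < r < a_1 or a_k ≤ r < b_k for some k; V(r) = 2π (r/b_k)^α b_k² if b_k ≤ r < c_k; V(r) = 2π r² log r if c_k ≤ r < d_k; V(r) = 2π (r/d_k)^β d_k² log d_k if d_k ≤ r < a_{k+1}. Define h(r) = 1 + ∫_1^r s/V(s) ds for r ≥ 1. Assume in addition that there is A ≥ 1 with b_k ≤ A·a_k and d_k ≤ A·c_k for all k. Then there exists R > e² such that if a_1 ≥ R, there are constants 0 < c ≤ C and r₀ > e such that for all r ≥ r₀: c·(log r)/(log log r) ≤ h(r) ≤ C·(log r)/(log log r). -/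
/-!
Write `f s = s / V s`. On a block `[a_k, a_{k+1}]` the integral of `f` splits into four explicit
pieces. Each is bounded (the first and third through `b_k ≤ M a_k` and `d_k ≤ M c_k`), and the
last one, over `[d_k, a_{k+1}]`, equals `(1 - 1 / log d_k) / (2π (2 - β)) ≥ 1 / (4π (2 - β))`.
Hence `h` grows by an amount bounded above and below by positive constants from `a_k` to
`a_{k+1}`, i.e. `h(a_n) ≍ n`.

On the other hand `log a_{k+1} - log a_k = log (b_k / a_k) + log log c_k / (α - 2)
+ log (d_k / c_k) + log log d_k / (2 - β)` is comparable to `log log a_k` once `a_1` is large,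
so `t ↦ t / log t` at `t = log a_k` also grows by a bounded, bounded-below amount per block.
Two functions that are monotone on each block and have such increments along `a_k` are
comparable, which gives `h(r) ≍ log r / log log r`.
-/

open Real MeasureTheory Set intervalIntegral Filter

lemma le_add_mul_of_forall_sub_le {s : ℕ → ℝ} {q : ℝ} (hs : ∀ k ≥ 1, s (k + 1) - s k ≤ q) :
    ∀ n ≥ 1, s n ≤ s 1 + (n - 1) * q := by
  intro n hn
  induction n, hn using Nat.le_induction with
  | base => simp
  | succ n hn ih => push_cast; linarith [hs n hn]

lemma add_mul_le_of_forall_le_sub {s : ℕ → ℝ} {p : ℝ} (hs : ∀ k ≥ 1, p ≤ s (k + 1) - s k) :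
    ∀ n ≥ 1, s 1 + (n - 1) * p ≤ s n := by
  intro n hn
  have := le_add_mul_of_forall_sub_le (s := fun k => -s k) (q := -p)
    (fun k hk => by linarith [hs k hk]) n hn
  linarith

lemma tendsto_atTop_of_forall_le_sub {s : ℕ → ℝ} {δ : ℝ} (hδ : 0 < δ)
    (hs : ∀ k ≥ 1, δ ≤ s (k + 1) - s k) : Tendsto s atTop atTop := by
  refine tendsto_atTop_mono' atTop (eventually_atTop.2 ⟨1, add_mul_le_of_forall_le_sub hs⟩) ?_
  refine tendsto_atTop_add_const_left _ _ (Tendsto.atTop_mul_const hδ ?_)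
  simpa only [sub_eq_add_neg] using tendsto_atTop_add_const_right _ (-1) tendsto_natCast_atTop_atTop

lemma exists_mem_Ico_of_tendsto_atTop {x : ℕ → ℝ} (hx : Tendsto x atTop atTop) {r : ℝ}
    (hr : x 1 ≤ r) : ∃ N ≥ 1, r ∈ Ico (x N) (x (N + 1)) := by
  classical
  have hex : ∃ n, r < x (n + 1) := by
    obtain ⟨n, hn⟩ := eventually_atTop.1 (hx.eventually_gt_atTop r)
    exact ⟨n, hn _ n.le_succ⟩
  have hN : 1 ≤ Nat.find hex := by
    by_contra! h0
    have := Nat.find_spec hex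
    rw [Nat.lt_one_iff.1 h0] at this
    exact (not_lt.2 hr) this
  refine ⟨Nat.find hex, hN, ?_, Nat.find_spec hex⟩
  have := Nat.find_min hex (m := Nat.find hex - 1) (by omega)
  rwa [Nat.sub_add_cancel hN, not_lt] at this

lemma exists_le_mul_of_increment_bounds {x : ℕ → ℝ} {u v : ℝ → ℝ} {p q : ℝ}
    (hx : Tendsto x atTop atTop)
    (hu : ∀ k ≥ 1, MonotoneOn u (Icc (x k) (x (k + 1))))
    (hv : ∀ k ≥ 1, MonotoneOn v (Icc (x k) (x (k + 1))))
    (huq : ∀ k ≥ 1, u (x (k + 1)) - u (x k) ≤ q)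
    (hvp : ∀ k ≥ 1, p ≤ v (x (k + 1)) - v (x k)) (hp : 0 < p) (hv1 : 0 < v (x 1)) :
    ∃ C > 0, ∀ r ≥ x 1, u r ≤ C * v r := by
  set m := min (v (x 1)) p
  have hm : 0 < m := lt_min hv1 hp
  refine ⟨(|u (x 1)| + |q| + 1) / m, by positivity, fun r hr => ?_⟩
  obtain ⟨N, hN, hrN⟩ := exists_mem_Ico_of_tendsto_atTop hx hr
  have hxN : x N ≤ x (N + 1) := hrN.1.trans hrN.2.le
  have hN' : (1 : ℝ) ≤ N := by exact_mod_cast hN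
  have hur : u r ≤ N * (|u (x 1)| + |q| + 1) := by
    have h₁ := hu N hN ⟨hrN.1, hrN.2.le⟩ ⟨hxN, le_rfl⟩ hrN.2.le
    have h₂ := le_add_mul_of_forall_sub_le (s := u ∘ x) huq (N + 1) (by omega)
    simp only [Function.comp, Nat.cast_add, Nat.cast_one, add_sub_cancel_right] at h₂
    nlinarith [le_abs_self (u (x 1)), le_abs_self q, abs_nonneg q, abs_nonneg (u (x 1))]
  have hvr : N * m ≤ v r := by
    have h₁ := hv N hN ⟨le_rfl, hxN⟩ ⟨hrN.1, hrN.2.le⟩ hrN.1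
    have h₂ := add_mul_le_of_forall_le_sub (s := v ∘ x) hvp N hN
    simp only [Function.comp] at h₂
    nlinarith [min_le_left (v (x 1)) p, min_le_right (v (x 1)) p]
  calc u r ≤ N * (|u (x 1)| + |q| + 1) := hur
    _ = (|u (x 1)| + |q| + 1) / m * (N * m) := by field_simp
    _ ≤ (|u (x 1)| + |q| + 1) / m * v r := by gcongr

lemma pos_of_increment_bounds {x : ℕ → ℝ} {v : ℝ → ℝ} {p : ℝ} (hx : Tendsto x atTop atTop)
    (hv : ∀ k ≥ 1, MonotoneOn v (Icc (x k) (x (k + 1))))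
    (hvp : ∀ k ≥ 1, p ≤ v (x (k + 1)) - v (x k)) (hp : 0 ≤ p) (hv1 : 0 < v (x 1)) :
    ∀ r ≥ x 1, 0 < v r := by
  intro r hr
  obtain ⟨N, hN, hrN⟩ := exists_mem_Ico_of_tendsto_atTop hx hr
  have h₁ := hv N hN ⟨le_rfl, hrN.1.trans hrN.2.le⟩ ⟨hrN.1, hrN.2.le⟩ hrN.1
  have h₂ := add_mul_le_of_forall_le_sub (s := v ∘ x) hvp N hN
  have hN' : (1 : ℝ) ≤ N := by exact_mod_cast hN
  simp only [Function.comp] at h₂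
  nlinarith

lemma exists_mul_le_and_le_mul_of_increment_bounds {x : ℕ → ℝ} {u v : ℝ → ℝ} {p q p' q' : ℝ}
    (hx : Tendsto x atTop atTop)
    (hu : ∀ k ≥ 1, MonotoneOn u (Icc (x k) (x (k + 1))))
    (hv : ∀ k ≥ 1, MonotoneOn v (Icc (x k) (x (k + 1))))
    (hux : ∀ k ≥ 1, p ≤ u (x (k + 1)) - u (x k) ∧ u (x (k + 1)) - u (x k) ≤ q)
    (hvx : ∀ k ≥ 1, p' ≤ v (x (k + 1)) - v (x k) ∧ v (x (k + 1)) - v (x k) ≤ q')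
    (hp : 0 < p) (hp' : 0 < p') (hu1 : 0 < u (x 1)) (hv1 : 0 < v (x 1)) :
    ∃ c C, 0 < c ∧ c ≤ C ∧ ∀ r ≥ x 1, c * v r ≤ u r ∧ u r ≤ C * v r := by
  obtain ⟨C, -, hC⟩ := exists_le_mul_of_increment_bounds hx hu hv
    (fun k hk => (hux k hk).2) (fun k hk => (hvx k hk).1) hp' hv1
  obtain ⟨C', hC'0, hC'⟩ := exists_le_mul_of_increment_bounds hx hv hu
    (fun k hk => (hvx k hk).2) (fun k hk => (hux k hk).1) hp hu1
  have hv0 := pos_of_increment_bounds hx hv (fun k hk => (hvx k hk).1) hp'.le hv1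
  refine ⟨C'⁻¹, max C C'⁻¹, inv_pos.2 hC'0, le_max_right _ _, fun r hr =>
    ⟨(inv_mul_le_iff₀ hC'0).2 (hC' r hr), ?_⟩⟩
  exact (hC r hr).trans (mul_le_mul_of_nonneg_right (le_max_left _ _) (hv0 r hr).le)

lemma intervalIntegrable_and_integral_eq_of_eqOn_Ioo {f f' F : ℝ → ℝ} {a b : ℝ} (hab : a ≤ b)
    (hF : ∀ x ∈ Icc a b, HasDerivAt F (f' x) x) (hf' : ContinuousOn f' (Icc a b))
    (hf : EqOn f f' (Ioo a b)) :
    IntervalIntegrable f volume a b ∧ ∫ x in a..b, f x = F b - F a := by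
  have hint : IntegrableOn f (Ioo a b) :=
    (hf'.integrableOn_Icc.mono_set Ioo_subset_Icc_self).congr_fun hf.symm measurableSet_Ioo
  refine ⟨(intervalIntegrable_iff_integrableOn_Ioo_of_le hab).2 hint, ?_⟩
  rw [integral_of_le hab, integral_Ioc_eq_integral_Ioo, setIntegral_congr_fun measurableSet_Ioo hf,
    ← integral_Ioc_eq_integral_Ioo, ← integral_of_le hab]
  exact integral_eq_sub_of_hasDerivAt (by rwa [uIcc_of_le hab]) (hf'.intervalIntegrable_of_Icc hab)

lemma integral_div_of_eq_sq {V : ℝ → ℝ} {x y : ℝ} (hx : 0 < x) (hxy : x ≤ y)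
    (hV : ∀ r, x ≤ r → r < y → V r = 2 * π * r ^ 2) :
    IntervalIntegrable (fun s => s / V s) volume x y ∧
      ∫ s in x..y, s / V s = (log y - log x) / (2 * π) := by
  have hne : ∀ s ∈ Icc x y, s ≠ 0 := fun s hs => (hx.trans_le hs.1).ne'
  rw [sub_div]
  refine intervalIntegrable_and_integral_eq_of_eqOn_Ioo (F := fun s => log s / (2 * π))
    (f' := fun s => s / (2 * π * s ^ 2)) hxy (fun s hs => ?_) ?_
    (fun s hs => by simp only [hV s hs.1.le hs.2])
  · refine ((hasDerivAt_log (hne s hs)).div_const _).congr_deriv ?_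
    field_simp [hne s hs]
  · exact continuousOn_id.div (by fun_prop) fun s hs => by simp [hne s hs, pi_ne_zero]

lemma integral_div_of_eq_rpow {V : ℝ → ℝ} {x y c p : ℝ} (hx : 0 < x) (hxy : x ≤ y) (hc : 0 < c)
    (hp : p ≠ 2) (hV : ∀ r, x ≤ r → r < y → V r = c * (r / x) ^ p * x ^ 2) :
    IntervalIntegrable (fun s => s / V s) volume x y ∧
      ∫ s in x..y, s / V s = ((y / x) ^ (2 - p) - 1) / (c * (2 - p)) := by
  have hpos : ∀ s ∈ Icc x y, 0 < s / x := fun s hs => div_pos (hx.trans_le hs.1) hx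
  have hF : ∀ s ∈ Icc x y, HasDerivAt (fun s => (s / x) ^ (2 - p) / (c * (2 - p)))
      (s / (c * (s / x) ^ p * x ^ 2)) s := by
    intro s hs
    have ht := hpos s hs
    refine ((((hasDerivAt_id s).div_const x).rpow_const (Or.inl ht.ne')).div_const _).congr_deriv ?_
    rw [id, show 2 - p - 1 = 1 - p by ring, rpow_sub ht, rpow_one]
    field_simp
  have := intervalIntegrable_and_integral_eq_of_eqOn_Ioo hxy hF ?_
    (f := fun s => s / V s) (fun s hs => by simp only [hV s hs.1.le hs.2])
  · simpa [div_self hx.ne', sub_div] using this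
  · refine continuousOn_id.div ?_ fun s hs => by have := hpos s hs; positivity
    exact (continuousOn_const.mul ((continuousOn_id.div_const x).rpow_const
      fun s hs => Or.inl (hpos s hs).ne')).mul continuousOn_const

lemma integral_div_of_eq_sq_mul_log {V : ℝ → ℝ} {x y : ℝ} (hx : 1 < x) (hxy : x ≤ y)
    (hV : ∀ r, x ≤ r → r < y → V r = 2 * π * r ^ 2 * log r) :
    IntervalIntegrable (fun s => s / V s) volume x y ∧
      ∫ s in x..y, s / V s = (log (log y) - log (log x)) / (2 * π) := by
  have hs1 : ∀ s ∈ Icc x y, 1 < s := fun s hs => hx.trans_le hs.1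
  rw [sub_div]
  refine intervalIntegrable_and_integral_eq_of_eqOn_Ioo (F := fun s => log (log s) / (2 * π))
    (f' := fun s => s / (2 * π * s ^ 2 * log s)) hxy (fun s hs => ?_) ?_
    (fun s hs => by simp only [hV s hs.1.le hs.2])
  · have h0 : s ≠ 0 := by linarith [hs1 s hs]
    have hl : log s ≠ 0 := (log_pos (hs1 s hs)).ne'
    refine (((hasDerivAt_log h0).log hl).div_const _).congr_deriv ?_
    field_simp
  · refine continuousOn_id.div ?_ fun s hs => ?_
    · exact (by fun_prop : ContinuousOn (fun s : ℝ => 2 * π * s ^ 2) _).mul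
        (continuousOn_log.mono fun s hs => (zero_lt_one.trans (hs1 s hs)).ne')
    · have := hs1 s hs; have := log_pos this; positivity

section PrimitivePlusConstant

variable {f h : ℝ → ℝ} {a c x y : ℝ}

lemma sub_eq_integral_of_eq_add_integral (hh : ∀ r, a ≤ r → h r = c + ∫ s in a..r, f s)
    (hax : a ≤ x) (hxy : x ≤ y) (hf : IntervalIntegrable f volume a y) :
    h y - h x = ∫ s in x..y, f s := by
  have hfx : IntervalIntegrable f volume a x :=
    hf.mono_set (by rw [uIcc_of_le hax, uIcc_of_le (hax.trans hxy)]; exact Icc_subset_Icc_right hxy)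
  rw [hh y (hax.trans hxy), hh x hax, ← integral_interval_sub_left hf hfx]
  ring

lemma monotoneOn_of_eq_add_integral (hh : ∀ r, a ≤ r → h r = c + ∫ s in a..r, f s)
    (hax : a ≤ x) (hf : IntervalIntegrable f volume a y) (hf0 : ∀ s ∈ Ioo x y, 0 ≤ f s) :
    MonotoneOn h (Icc x y) := by
  intro r hr r' hr' hrr'
  have hfr' : IntervalIntegrable f volume a r' :=
    hf.mono_set (by
      rw [uIcc_of_le (hax.trans hr'.1), uIcc_of_le (hax.trans (hr'.1.trans hr'.2))]
      exact Icc_subset_Icc_right hr'.2)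
  have := sub_eq_integral_of_eq_add_integral hh (hax.trans hr.1) hrr' hfr'
  rw [integral_of_le hrr', integral_Ioc_eq_integral_Ioo] at this
  have hnn := setIntegral_nonneg (μ := volume) measurableSet_Ioo
    fun s hs => hf0 s ⟨hr.1.trans_lt hs.1, hs.2.trans_le hr'.2⟩
  linarith

lemma increment_bounds_of_eq_add_integral {p q : ℝ} {xs : ℕ → ℝ}
    (hh : ∀ r, a ≤ r → h r = c + ∫ s in a..r, f s) (ha : a ≤ xs 1)
    (hxs : ∀ k ≥ 1, xs k ≤ xs (k + 1)) (hf₁ : IntervalIntegrable f volume a (xs 1))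
    (hblock : ∀ k ≥ 1, IntervalIntegrable f volume (xs k) (xs (k + 1)) ∧
      p ≤ ∫ s in xs k..xs (k + 1), f s ∧ ∫ s in xs k..xs (k + 1), f s ≤ q)
    (hf0 : ∀ k ≥ 1, ∀ s ∈ Ioo (xs k) (xs (k + 1)), 0 ≤ f s) :
    (∀ k ≥ 1, MonotoneOn h (Icc (xs k) (xs (k + 1)))) ∧
      ∀ k ≥ 1, p ≤ h (xs (k + 1)) - h (xs k) ∧ h (xs (k + 1)) - h (xs k) ≤ q := by
  have hint : ∀ n ≥ 1, IntervalIntegrable f volume a (xs n) := by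
    intro n hn
    induction n, hn using Nat.le_induction with
    | base => exact hf₁
    | succ n hn ih => exact ih.trans (hblock n hn).1
  have hax : ∀ k ≥ 1, a ≤ xs k := fun k hk =>
    ha.trans (Nat.rel_of_forall_rel_succ_of_le_of_le (· ≤ ·) hxs le_rfl hk)
  refine ⟨fun k hk => monotoneOn_of_eq_add_integral hh (hax k hk) (hint (k + 1) (by omega))
    (hf0 k hk), fun k hk => ?_⟩
  rw [sub_eq_integral_of_eq_add_integral hh (hax k hk) (hxs k hk) (hint (k + 1) (by omega))]
  exact (hblock k hk).2

end PrimitivePlusConstant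

lemma mul_log_le_half {κ L : ℝ} (hκ : 0 ≤ κ) (hL : (4 * κ) ^ 2 ≤ L) : κ * log L ≤ L / 2 := by
  have hL0 : 0 ≤ L := (sq_nonneg _).trans hL
  rcases hL0.eq_or_lt with rfl | hL0
  · simp
  have hsqrt : 4 * κ ≤ √L := by
    rw [← sqrt_sq (by positivity : 0 ≤ 4 * κ)]; exact sqrt_le_sqrt hL
  have hlog : log L ≤ 2 * √L := by
    have := log_le_sub_one_of_pos (sqrt_pos.2 hL0)
    rw [log_sqrt hL0.le] at this
    linarith
  nlinarith [sq_sqrt hL0.le, sqrt_nonneg L]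

lemma div_log_sub_div_log_le {t t' : ℝ} (ht : 1 < t) (htt' : t ≤ t') :
    t' / log t' - t / log t ≤ (t' - t) / log t := by
  have hl : 0 < log t := log_pos ht
  have : t' / log t' ≤ t' / log t :=
    div_le_div_of_nonneg_left (by linarith) hl (log_le_log (by linarith) htt')
  rw [sub_div]
  linarith

lemma div_four_log_le_div_log_sub_div_log {t t' : ℝ} (ht : 0 < t) (hlt : 2 ≤ log t)
    (htt' : t ≤ t') (hlt' : log t' ≤ 2 * log t) :
    (t' - t) / (4 * log t) ≤ t' / log t' - t / log t := by
  have hll' : log t ≤ log t' := log_le_log ht htt'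
  have hlog_sub : t * (log t' - log t) ≤ t' - t := by
    have := log_le_sub_one_of_pos (div_pos (ht.trans_le htt') ht)
    rw [log_div (ht.trans_le htt').ne' ht.ne'] at this
    calc t * (log t' - log t) ≤ t * (t' / t - 1) := by gcongr
      _ = t' - t := by field_simp
  rw [div_sub_div _ _ (by linarith) (by linarith), div_le_div_iff₀ (by positivity) (by nlinarith)]
  nlinarith [mul_nonneg (mul_nonneg (sub_nonneg.2 htt') (by linarith : (0:ℝ) ≤ log t))
      (by linarith : (0:ℝ) ≤ log t - 2),
    mul_nonneg (mul_nonneg (sub_nonneg.2 htt') (by linarith : (0:ℝ) ≤ log t))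
      (by linarith : (0:ℝ) ≤ 2 * log t - log t'),
    mul_le_mul_of_nonneg_left hlog_sub (by linarith : (0:ℝ) ≤ log t)]

lemma monotoneOn_log_div_log_log :
    MonotoneOn (fun r => log r / log (log r)) (Ici (exp (exp 1))) := by
  intro r hr r' hr' hrr'
  have hpos : 0 < exp (exp 1) := exp_pos _
  have hl : exp 1 ≤ log r := (le_log_iff_exp_le (hpos.trans_le hr)).2 hr
  have hl' : exp 1 ≤ log r' := (le_log_iff_exp_le (hpos.trans_le hr')).2 hr'
  have h := log_div_self_antitoneOn hl hl' (log_le_log (hpos.trans_le hr) hrr')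
  have hll' : 0 < log (log r') := log_pos ((one_lt_exp_iff.2 one_pos).trans_le hl')
  have := one_div_le_one_div_of_le (div_pos hll' ((exp_pos 1).trans_le hl')) h
  simpa only [one_div_div] using this

lemma le_log_log_of_exp_exp_le {T x : ℝ} (h : exp (exp T) ≤ x) : T ≤ log (log x) := by
  have hx : exp T ≤ log x := (le_log_iff_exp_le ((exp_pos _).trans_le h)).2 h
  exact (le_log_iff_exp_le ((exp_pos _).trans_le hx)).2 hx

lemma tendsto_atTop_of_le_sub_log_div_log_log {x : ℕ → ℝ} {δ : ℝ} (hδ : 0 < δ)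
    (hx : ∀ k ≥ 1, exp (exp 1) ≤ x k)
    (hinc : ∀ k ≥ 1, δ ≤ log (x (k + 1)) / log (log (x (k + 1))) - log (x k) / log (log (x k))) :
    Tendsto x atTop atTop := by
  refine tendsto_atTop_mono' _ (eventually_atTop.2 ⟨1, fun k hk => ?_⟩)
    (tendsto_atTop_of_forall_le_sub (s := fun k => log (x k) / log (log (x k))) hδ hinc)
  have hpos : 0 < x k := (exp_pos _).trans_le (hx k hk)
  have hl : exp 1 ≤ log (x k) := (le_log_iff_exp_le hpos).2 (hx k hk)
  exact (div_le_self ((exp_pos 1).le.trans hl) (le_log_log_of_exp_exp_le (hx k hk))).trans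
    (log_le_self hpos.le)

/-- `a b c d a'` stand for `a_k, b_k, c_k, d_k, a_{k+1}`. -/
structure IsBlock (α β M a b c d a' : ℝ) : Prop where
  exp_two_lt : exp 2 < a
  le_b : a ≤ b
  b_lt : b < c
  c_le : c ≤ d
  d_lt : d < a'
  b_le : b ≤ M * a
  d_le : d ≤ M * c
  b_eq : b = c / log c ^ (1 / (α - 2))
  a'_eq : a' = d * log d ^ (1 / (2 - β))

structure IsVolumeProfile (α β : ℝ) (V : ℝ → ℝ) (a b c d a' : ℝ) : Prop where
  quadratic : ∀ r, a ≤ r → r < b → V r = 2 * π * r ^ 2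
  steep : ∀ r, b ≤ r → r < c → V r = 2 * π * (r / b) ^ α * b ^ 2
  logarithmic : ∀ r, c ≤ r → r < d → V r = 2 * π * r ^ 2 * log r
  flat : ∀ r, d ≤ r → r < a' → V r = 2 * π * (r / d) ^ β * d ^ 2 * log d

noncomputable def growthConst (α β M : ℝ) : ℝ :=
  2 * log M + (1 / (α - 2) + 1 / (2 - β)) * (1 + log (2 + 3 * log M))

/-- Once `log log a_k` exceeds this, `mul_log_le_half` applies to `log c_k` and
`log log a_{k+1} ≤ 2 log log a_k`. -/
noncomputable def loglogThreshold (α β M : ℝ) : ℝ :=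
  2 + log (1 + growthConst α β M) + (4 / (α - 2)) ^ 2

lemma growthConst_nonneg {α β M : ℝ} (hα : 2 < α) (hβ : β < 2) (hM : 1 ≤ M) :
    0 ≤ growthConst α β M := by
  have := log_nonneg hM
  have : 0 ≤ 1 / (α - 2) + 1 / (2 - β) :=
    add_nonneg (one_div_pos.2 (by linarith)).le (one_div_pos.2 (by linarith)).le
  have := log_nonneg (by linarith : (1 : ℝ) ≤ 2 + 3 * log M)
  unfold growthConst
  positivity

lemma two_le_loglogThreshold {α β M : ℝ} (hα : 2 < α) (hβ : β < 2) (hM : 1 ≤ M) :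
    2 ≤ loglogThreshold α β M := by
  have := log_nonneg (by linarith [growthConst_nonneg hα hβ hM] : 1 ≤ 1 + growthConst α β M)
  have := sq_nonneg (4 / (α - 2))
  unfold loglogThreshold
  linarith

namespace IsBlock

variable {α β M a b c d a' : ℝ}

lemma a_pos (hB : IsBlock α β M a b c d a') : 0 < a := (exp_pos 2).trans hB.exp_two_lt

lemma two_lt_log_a (hB : IsBlock α β M a b c d a') : 2 < log a :=
  (lt_log_iff_exp_lt hB.a_pos).2 hB.exp_two_lt

lemma one_le_M (hB : IsBlock α β M a b c d a') : 1 ≤ M :=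
  le_of_mul_le_mul_right (by linarith [hB.le_b, hB.b_le]) hB.a_pos

lemma exp_two_lt_c (hB : IsBlock α β M a b c d a') : exp 2 < c := by
  linarith [hB.exp_two_lt, hB.le_b, hB.b_lt]

lemma c_pos (hB : IsBlock α β M a b c d a') : 0 < c := (exp_pos 2).trans hB.exp_two_lt_c

lemma d_pos (hB : IsBlock α β M a b c d a') : 0 < d := hB.c_pos.trans_le hB.c_le

lemma two_lt_log_c (hB : IsBlock α β M a b c d a') : 2 < log c :=
  (lt_log_iff_exp_lt hB.c_pos).2 hB.exp_two_lt_c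

lemma two_lt_log_d (hB : IsBlock α β M a b c d a') : 2 < log d :=
  hB.two_lt_log_c.trans_le (log_le_log hB.c_pos hB.c_le)

lemma le_a' (hB : IsBlock α β M a b c d a') : a ≤ a' :=
  hB.le_b.trans (hB.b_lt.le.trans (hB.c_le.trans hB.d_lt.le))

lemma log_b_eq (hB : IsBlock α β M a b c d a') :
    log b = log c - 1 / (α - 2) * log (log c) := by
  have := hB.two_lt_log_c
  rw [hB.b_eq, log_div hB.c_pos.ne' (rpow_pos_of_pos (by linarith) _).ne', log_rpow (by linarith)]

lemma log_a'_eq (hB : IsBlock α β M a b c d a') :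
    log a' = log d + 1 / (2 - β) * log (log d) := by
  have := hB.two_lt_log_d
  rw [hB.a'_eq, log_mul hB.d_pos.ne' (rpow_pos_of_pos (by linarith) _).ne', log_rpow (by linarith)]

lemma div_rpow_eq_log (hB : IsBlock α β M a b c d a') (hβ : β < 2) :
    (a' / d) ^ (2 - β) = log d := by
  rw [hB.a'_eq, mul_div_cancel_left₀ _ hB.d_pos.ne', ← rpow_mul (by linarith [hB.two_lt_log_d]),
    one_div_mul_cancel (by linarith), rpow_one]

lemma log_le_log_M_add (hB : IsBlock α β M a b c d a') :
    log b ≤ log M + log a ∧ log d ≤ log M + log c := by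
  have hM : 0 < M := zero_lt_one.trans_le hB.one_le_M
  rw [← log_mul hM.ne' hB.a_pos.ne', ← log_mul hM.ne' hB.c_pos.ne']
  exact ⟨log_le_log (hB.a_pos.trans_le hB.le_b) hB.b_le, log_le_log hB.d_pos hB.d_le⟩

lemma log_log_sub_le (hB : IsBlock α β M a b c d a') :
    log (log d) - log (log c) ≤ log M / 2 := by
  have hc := hB.two_lt_log_c
  have hd := hB.two_lt_log_d
  rw [← log_div (by linarith) (by linarith)]
  refine (log_le_sub_one_of_pos (by positivity)).trans ?_
  rw [div_sub_one (by linarith), div_le_div_iff₀ (by linarith) two_pos]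
  nlinarith [hB.log_le_log_M_add.2, log_nonneg hB.one_le_M]

lemma integral_eq (hB : IsBlock α β M a b c d a') (hα : 2 < α) (hβ : β < 2) {V : ℝ → ℝ}
    (hV : IsVolumeProfile α β V a b c d a') :
    IntervalIntegrable (fun s => s / V s) volume a a' ∧
      ∫ s in a..a', s / V s = (log b - log a) / (2 * π)
        + (1 - (c / b) ^ (2 - α)) / (2 * π * (α - 2))
        + (log (log d) - log (log c)) / (2 * π)
        + (1 - (log d)⁻¹) / (2 * π * (2 - β)) := by
  have hb : 0 < b := hB.a_pos.trans_le hB.le_b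
  have hc : 1 < c := (one_lt_exp_iff.2 two_pos).trans hB.exp_two_lt_c
  have := hB.two_lt_log_d
  obtain ⟨i₁, e₁⟩ := integral_div_of_eq_sq hB.a_pos hB.le_b hV.quadratic
  obtain ⟨i₂, e₂⟩ := integral_div_of_eq_rpow hb hB.b_lt.le two_pi_pos hα.ne' hV.steep
  obtain ⟨i₃, e₃⟩ := integral_div_of_eq_sq_mul_log hc hB.c_le hV.logarithmic
  obtain ⟨i₄, e₄⟩ := integral_div_of_eq_rpow (V := V) (c := 2 * π * log d) hB.d_pos hB.d_lt.le
    (by positivity) hβ.ne fun r h₁ h₂ => by rw [hV.flat r h₁ h₂]; ring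
  refine ⟨((i₁.trans i₂).trans i₃).trans i₄, ?_⟩
  rw [← integral_add_adjacent_intervals ((i₁.trans i₂).trans i₃) i₄,
    ← integral_add_adjacent_intervals (i₁.trans i₂) i₃, ← integral_add_adjacent_intervals i₁ i₂,
    e₁, e₂, e₃, e₄, hB.div_rpow_eq_log hβ]
  have : 2 - β ≠ 0 := by linarith
  have : 2 - α ≠ 0 := by linarith
  have : α - 2 ≠ 0 := by linarith
  field_simp
  ring

lemma integral_bounds (hB : IsBlock α β M a b c d a') (hα : 2 < α) (hβ : β < 2) {V : ℝ → ℝ}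
    (hV : IsVolumeProfile α β V a b c d a') :
    IntervalIntegrable (fun s => s / V s) volume a a' ∧
      1 / (4 * π * (2 - β)) ≤ ∫ s in a..a', s / V s ∧
      ∫ s in a..a', s / V s ≤ log M / π + 1 / (2 * π * (α - 2)) + 1 / (2 * π * (2 - β)) := by
  obtain ⟨hint, heq⟩ := hB.integral_eq hα hβ hV
  refine ⟨hint, ?_⟩
  rw [heq]
  have hb : 0 < b := hB.a_pos.trans_le hB.le_b
  have hab : 0 ≤ log b - log a := sub_nonneg.2 (log_le_log hB.a_pos hB.le_b)
  have hcd : 0 ≤ log (log d) - log (log c) :=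
    sub_nonneg.2 (log_le_log (by linarith [hB.two_lt_log_c]) (log_le_log hB.c_pos hB.c_le))
  have hcb : 0 < (c / b) ^ (2 - α) := rpow_pos_of_pos (div_pos hB.c_pos hb) _
  have hcb' : (c / b) ^ (2 - α) ≤ 1 :=
    rpow_le_one_of_one_le_of_nonpos ((one_le_div hb).2 hB.b_lt.le) (by linarith)
  have hld : (log d)⁻¹ ≤ 1 / 2 := by
    rw [one_div]; exact inv_anti₀ two_pos hB.two_lt_log_d.le
  have hld' : 0 < (log d)⁻¹ := inv_pos.2 (by linarith [hB.two_lt_log_d])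
  constructor
  · have : 0 ≤ (1 - (c / b) ^ (2 - α)) / (2 * π * (α - 2)) :=
      div_nonneg (by linarith) (by positivity)
    calc 1 / (4 * π * (2 - β)) = (1 - 1 / 2) / (2 * π * (2 - β)) := by field_simp; ring
      _ ≤ (1 - (log d)⁻¹) / (2 * π * (2 - β)) := by gcongr
      _ ≤ _ := by
        have := div_nonneg hab (by positivity : (0 : ℝ) ≤ 2 * π)
        have := div_nonneg hcd (by positivity : (0 : ℝ) ≤ 2 * π)
        linarith
  · calc _ ≤ log M / (2 * π) + 1 / (2 * π * (α - 2)) + log M / (2 * π) + 1 / (2 * π * (2 - β)) := by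
          gcongr
          · linarith [hB.log_le_log_M_add.1]
          · linarith
          · linarith [hB.log_log_sub_le]
          · linarith
      _ = _ := by ring

lemma V_pos (hB : IsBlock α β M a b c d a') {V : ℝ → ℝ} (hV : IsVolumeProfile α β V a b c d a') :
    ∀ u ∈ Ico a a', 0 < V u := by
  intro u ⟨hau, hua'⟩
  have hu : 0 < u := hB.a_pos.trans_le hau
  have hb : 0 < b := hB.a_pos.trans_le hB.le_b
  rcases lt_or_ge u b with hub | hbu
  · rw [hV.quadratic u hau hub]; positivity
  rcases lt_or_ge u c with huc | hcu
  · rw [hV.steep u hbu huc]; positivity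
  rcases lt_or_ge u d with hud | hdu
  · have : 0 < log u := by linarith [hB.two_lt_log_c, log_le_log hB.c_pos hcu]
    rw [hV.logarithmic u hcu hud]; positivity
  · have : 0 < log d := by linarith [hB.two_lt_log_d]
    have := hB.d_pos
    rw [hV.flat u hdu hua']; positivity

lemma log_log_d_le (hB : IsBlock α β M a b c d a') (hα : 2 < α)
    (hθ : (4 / (α - 2)) ^ 2 ≤ log a) (hℓ : 1 ≤ log (log a)) :
    log (log d) ≤ (1 + log (2 + 3 * log M)) * log (log a) := by
  have hM := log_nonneg hB.one_le_M
  have hac : log a ≤ log c := log_le_log hB.a_pos (hB.le_b.trans hB.b_lt.le)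
  have hla := hB.two_lt_log_a
  -- the correction in `log b = log c - log log c / (α - 2)` is at most `log c / 2`
  have hhalf : 1 / (α - 2) * log (log c) ≤ log c / 2 :=
    mul_log_le_half (one_div_pos.2 (by linarith)).le (by rw [mul_one_div]; exact hθ.trans hac)
  have hd : log d ≤ (2 + 3 * log M) * log a := by
    nlinarith [hB.log_b_eq, hB.log_le_log_M_add]
  calc log (log d) ≤ log ((2 + 3 * log M) * log a) :=
        log_le_log (by linarith [hB.two_lt_log_d]) hd
    _ = log (2 + 3 * log M) + log (log a) := log_mul (by positivity) (by positivity)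
    _ ≤ (1 + log (2 + 3 * log M)) * log (log a) := by
        nlinarith [log_nonneg (by linarith : (1 : ℝ) ≤ 2 + 3 * log M)]

lemma log_sub_log_bounds (hB : IsBlock α β M a b c d a') (hα : 2 < α) (hβ : β < 2)
    (hθ : (4 / (α - 2)) ^ 2 ≤ log a) (hℓ : 1 ≤ log (log a)) :
    1 / (α - 2) * log (log a) ≤ log a' - log a ∧
      log a' - log a ≤ growthConst α β M * log (log a) := by
  have hac : log a ≤ log c := log_le_log hB.a_pos (hB.le_b.trans hB.b_lt.le)
  have hcd : log c ≤ log d := log_le_log hB.c_pos hB.c_le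
  have hla := hB.two_lt_log_a
  have hℓc : log (log a) ≤ log (log c) := log_le_log (by linarith) hac
  have hcd' : log (log c) ≤ log (log d) := log_le_log (by linarith) hcd
  have hlogd := hB.log_log_d_le hα hθ hℓ
  have hab : log a ≤ log b := log_le_log hB.a_pos hB.le_b
  have hα2 : 0 < 1 / (α - 2) := one_div_pos.2 (by linarith)
  have hβ2 : 0 < 1 / (2 - β) := one_div_pos.2 (by linarith)
  obtain ⟨hb, hd⟩ := hB.log_le_log_M_add
  have hb' := hB.log_b_eq
  rw [hB.log_a'_eq]
  constructor
  · nlinarith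
  · unfold growthConst
    nlinarith [mul_le_mul_of_nonneg_left (hcd'.trans hlogd) hα2.le,
      mul_le_mul_of_nonneg_left hlogd hβ2.le]

lemma log_div_log_log_sub_bounds (hB : IsBlock α β M a b c d a') (hα : 2 < α) (hβ : β < 2)
    (hT : loglogThreshold α β M ≤ log (log a)) :
    1 / (4 * (α - 2)) ≤ log a' / log (log a') - log a / log (log a) ∧
      log a' / log (log a') - log a / log (log a) ≤ growthConst α β M := by
  set K := growthConst α β M
  have hK := growthConst_nonneg hα hβ hB.one_le_M
  have hla := hB.two_lt_log_a
  have hlog := log_le_self (by linarith : (0 : ℝ) ≤ log a)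
  have hK1 := log_nonneg (by linarith : (1 : ℝ) ≤ 1 + K)
  unfold loglogThreshold at hT
  have hℓ : 2 ≤ log (log a) := by nlinarith
  obtain ⟨hlow, hup⟩ := hB.log_sub_log_bounds hα hβ (by nlinarith) (by linarith)
  have hα2 : 0 < α - 2 := by linarith
  have hmono : log a ≤ log a' := by nlinarith [one_div_pos.2 hα2]
  constructor
  · have hlt' : log (log a') ≤ 2 * log (log a) :=
      calc log (log a') ≤ log ((1 + K) * log a) := log_le_log (by linarith) (by nlinarith)
        _ = log (1 + K) + log (log a) := log_mul (by positivity) (by positivity)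
        _ ≤ 2 * log (log a) := by nlinarith
    refine le_trans ?_ (div_four_log_le_div_log_sub_div_log (by linarith) hℓ hmono hlt')
    rw [div_le_div_iff₀ (by positivity) (by positivity)]
    rw [one_div_mul_eq_div, div_le_iff₀ hα2] at hlow
    nlinarith
  · refine (div_log_sub_div_log_le (by linarith) hmono).trans ?_
    rw [div_le_iff₀ (by linarith)]
    linarith

end IsBlock

section BlockSequence

variable {α β M : ℝ} {A B Cs D : ℕ → ℝ}

lemma first_le_of_isBlock (hB : ∀ k ≥ 1, IsBlock α β M (A k) (B k) (Cs k) (D k) (A (k + 1))) :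
    ∀ k ≥ 1, A 1 ≤ A k := fun _ hk =>
  Nat.rel_of_forall_rel_succ_of_le_of_le (· ≤ ·) (fun n hn => (hB n hn).le_a') le_rfl hk

lemma primitive_increment_bounds {V h : ℝ → ℝ} (hα : 2 < α) (hβ : β < 2)
    (hB : ∀ k ≥ 1, IsBlock α β M (A k) (B k) (Cs k) (D k) (A (k + 1)))
    (hV : ∀ k ≥ 1, IsVolumeProfile α β V (A k) (B k) (Cs k) (D k) (A (k + 1)))
    (hV₀ : ∀ r, 0 < r → r < A 1 → V r = 2 * π * r ^ 2)
    (hh : ∀ r, 1 ≤ r → h r = 1 + ∫ s in (1 : ℝ)..r, s / V s) :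
    0 < h (A 1) ∧ (∀ k ≥ 1, MonotoneOn h (Icc (A k) (A (k + 1)))) ∧
      ∀ k ≥ 1, 1 / (4 * π * (2 - β)) ≤ h (A (k + 1)) - h (A k) ∧
        h (A (k + 1)) - h (A k) ≤ log M / π + 1 / (2 * π * (α - 2)) + 1 / (2 * π * (2 - β)) := by
  have hA := first_le_of_isBlock hB
  have hA₁ : 1 < A 1 := (one_lt_exp_iff.2 two_pos).trans (hB 1 le_rfl).exp_two_lt
  obtain ⟨hI₁, eI₁⟩ := integral_div_of_eq_sq one_pos hA₁.le fun r h₁ h₂ => hV₀ r (by linarith) h₂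
  refine ⟨?_, increment_bounds_of_eq_add_integral hh hA₁.le (fun k hk => (hB k hk).le_a') hI₁
    (fun k hk => (hB k hk).integral_bounds hα hβ (hV k hk))
    fun k hk s hs => (div_pos (by linarith [hA k hk, hs.1])
      ((hB k hk).V_pos (hV k hk) s (Ioo_subset_Ico_self hs))).le⟩
  rw [hh _ hA₁.le, eI₁, log_one, sub_zero]
  have := log_pos hA₁
  positivity

lemma log_div_log_log_increment_bounds (hα : 2 < α) (hβ : β < 2)
    (hB : ∀ k ≥ 1, IsBlock α β M (A k) (B k) (Cs k) (D k) (A (k + 1)))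
    (hA₁ : exp (exp (loglogThreshold α β M)) ≤ A 1) :
    Tendsto A atTop atTop ∧ 0 < log (A 1) / log (log (A 1)) ∧
      (∀ k ≥ 1, MonotoneOn (fun r => log r / log (log r)) (Icc (A k) (A (k + 1)))) ∧
      ∀ k ≥ 1, 1 / (4 * (α - 2)) ≤ log (A (k + 1)) / log (log (A (k + 1)))
          - log (A k) / log (log (A k)) ∧
        log (A (k + 1)) / log (log (A (k + 1))) - log (A k) / log (log (A k)) ≤
          growthConst α β M := by
  have hT := two_le_loglogThreshold hα hβ (hB 1 le_rfl).one_le_M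
  have hA (k) (hk : k ≥ 1) : exp (exp (loglogThreshold α β M)) ≤ A k :=
    hA₁.trans (first_le_of_isBlock hB k hk)
  have hee (k) (hk : k ≥ 1) : exp (exp 1) ≤ A k := (hA k hk).trans' (by gcongr; linarith)
  have hinc (k) (hk : k ≥ 1) :=
    (hB k hk).log_div_log_log_sub_bounds hα hβ (le_log_log_of_exp_exp_le (hA k hk))
  refine ⟨tendsto_atTop_of_le_sub_log_div_log_log (one_div_pos.2 (by linarith)) hee
    fun k hk => (hinc k hk).1, ?_, fun k hk => monotoneOn_log_div_log_log.mono
      fun r hr => (hee k hk).trans hr.1, hinc⟩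
  exact div_pos (log_pos ((one_lt_exp_iff.2 two_pos).trans (hB 1 le_rfl).exp_two_lt))
    (by linarith [le_log_log_of_exp_exp_le hA₁])

end BlockSequence

theorem stmt_12_general (α β M : ℝ) (hα : 2 < α) (hβ2 : β < 2) (hM : 1 ≤ M) :
    ∃ R : ℝ, Real.exp 2 < R ∧
      ∀ (A B Cs D : ℕ → ℝ) (V h : ℝ → ℝ),
        Real.exp 2 < A 1 → R ≤ A 1 →
        (∀ k ≥ 1, A k ≤ B k ∧ B k < Cs k ∧ Cs k ≤ D k ∧ D k < A (k + 1)) →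
        (∀ k ≥ 1, B k = Cs k / Real.log (Cs k) ^ ((1:ℝ) / (α - 2))) →
        (∀ k ≥ 1, A (k + 1) = D k * Real.log (D k) ^ ((1:ℝ) / (2 - β))) →
        (∀ r : ℝ, 0 < r → r < A 1 → V r = 2 * Real.pi * r ^ 2) →
        (∀ k ≥ 1, ∀ r : ℝ, A k ≤ r → r < B k → V r = 2 * Real.pi * r ^ 2) →
        (∀ k ≥ 1, ∀ r : ℝ, B k ≤ r → r < Cs k →
          V r = 2 * Real.pi * (r / B k) ^ α * B k ^ 2) →
        (∀ k ≥ 1, ∀ r : ℝ, Cs k ≤ r → r < D k →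
          V r = 2 * Real.pi * r ^ 2 * Real.log r) →
        (∀ k ≥ 1, ∀ r : ℝ, D k ≤ r → r < A (k + 1) →
          V r = 2 * Real.pi * (r / D k) ^ β * D k ^ 2 * Real.log (D k)) →
        (∀ r : ℝ, 1 ≤ r → h r = 1 + ∫ s in (1:ℝ)..r, s / V s) →
        (∀ k ≥ 1, B k ≤ M * A k) →
        (∀ k ≥ 1, D k ≤ M * Cs k) →
        ∃ c C r₀ : ℝ, 0 < c ∧ c ≤ C ∧ Real.exp 1 < r₀ ∧
          ∀ r ≥ r₀,
            c * (Real.log r / Real.log (Real.log r)) ≤ h r ∧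
            h r ≤ C * (Real.log r / Real.log (Real.log r)) := by
  set T := loglogThreshold α β M
  refine ⟨exp (exp T), exp_lt_exp.2 ?_, ?_⟩
  · linarith [add_one_le_exp T, two_le_loglogThreshold hα hβ2 hM]
  intro A B Cs D V h hA1e hRA1 hchain hbdef hadef hV0 hVa hVb hVc hVd hh hbM hdM
  have hA : ∀ k ≥ 1, A 1 ≤ A k := fun k hk => Nat.rel_of_forall_rel_succ_of_le_of_le (· ≤ ·)
    (fun n hn => by linarith [hchain n hn]) le_rfl hk
  have hB (k) (hk : k ≥ 1) : IsBlock α β M (A k) (B k) (Cs k) (D k) (A (k + 1)) :=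
    let ⟨h₁, h₂, h₃, h₄⟩ := hchain k hk
    ⟨hA1e.trans_le (hA k hk), h₁, h₂, h₃, h₄, hbM k hk, hdM k hk, hbdef k hk, hadef k hk⟩
  have hV (k) (hk : k ≥ 1) : IsVolumeProfile α β V (A k) (B k) (Cs k) (D k) (A (k + 1)) :=
    ⟨hVa k hk, hVb k hk, hVc k hk, hVd k hk⟩
  obtain ⟨hhA₁, hmono_h, hinc_h⟩ := primitive_increment_bounds hα hβ2 hB hV hV0 hh
  obtain ⟨htend, hvA₁, hmono_v, hinc_v⟩ := log_div_log_log_increment_bounds hα hβ2 hB hRA1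
  obtain ⟨c, C, hc, hcC, hbounds⟩ := exists_mul_le_and_le_mul_of_increment_bounds htend
    hmono_h hmono_v hinc_h hinc_v (one_div_pos.2 (by nlinarith [pi_pos]))
    (one_div_pos.2 (by linarith)) hhA₁ hvA₁
  exact ⟨c, C, A 1, hc, hcC, (exp_lt_exp.2 one_lt_two).trans hA1e, hbounds⟩

/-- Lemma 3.1 of the paper: under the additional comparability
`b_k ≤ M·a_k`, `d_k ≤ M·c_k` (condition (3.14)), if `a_1` is large enough then
`h(r) ≃ log r / log log r` for large `r`. -/
theorem stmt_12 (α β M : ℝ) (hα : 2 < α) (hβ0 : 0 < β) (hβ2 : β < 2) (hM : 1 ≤ M) :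
    ∃ R : ℝ, Real.exp 2 < R ∧
      ∀ (A B Cs D : ℕ → ℝ) (V h : ℝ → ℝ),
        Real.exp 2 < A 1 → R ≤ A 1 →
        (∀ k ≥ 1, A k ≤ B k ∧ B k < Cs k ∧ Cs k ≤ D k ∧ D k < A (k + 1)) →
        (∀ k ≥ 1, B k = Cs k / Real.log (Cs k) ^ ((1:ℝ) / (α - 2))) →
        (∀ k ≥ 1, A (k + 1) = D k * Real.log (D k) ^ ((1:ℝ) / (2 - β))) →
        (∀ r : ℝ, 0 < r → r < A 1 → V r = 2 * Real.pi * r ^ 2) →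
        (∀ k ≥ 1, ∀ r : ℝ, A k ≤ r → r < B k → V r = 2 * Real.pi * r ^ 2) →
        (∀ k ≥ 1, ∀ r : ℝ, B k ≤ r → r < Cs k →
          V r = 2 * Real.pi * (r / B k) ^ α * B k ^ 2) →
        (∀ k ≥ 1, ∀ r : ℝ, Cs k ≤ r → r < D k →
          V r = 2 * Real.pi * r ^ 2 * Real.log r) →
        (∀ k ≥ 1, ∀ r : ℝ, D k ≤ r → r < A (k + 1) →
          V r = 2 * Real.pi * (r / D k) ^ β * D k ^ 2 * Real.log (D k)) →
        (∀ r : ℝ, 1 ≤ r → h r = 1 + ∫ s in (1:ℝ)..r, s / V s) →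
        (∀ k ≥ 1, B k ≤ M * A k) →
        (∀ k ≥ 1, D k ≤ M * Cs k) →
        ∃ c C r₀ : ℝ, 0 < c ∧ c ≤ C ∧ Real.exp 1 < r₀ ∧
          ∀ r ≥ r₀,
            c * (Real.log r / Real.log (Real.log r)) ≤ h r ∧
            h r ≤ C * (Real.log r / Real.log (Real.log r)) :=
  stmt_12_general α β M hα hβ2 hM
end

section
/- Fix real numbers α > 2 and 0 < β < 2. Let (a_k), (b_k), (c_k), (d_k), k ≥ 1, be sequences of reals with e² < a_1 and a_k ≤ b_k < c_k ≤ d_k < a_{k+1} for all k, satisfying b_k = c_k/(log c_k)^{1/(α−2)} and a_{k+1} = d_k (log d_k)^{1/(2−β)}. Define V : (0,∞) → ℝ by V(r) = 2π r² if 0 < r < a_1 or a_k ≤ r < b_k for some k; V(r) = 2π (r/b_k)^α b_k² if b_k ≤ r < c_k; V(r) = 2π r² log r if c_k ≤ r < d_k; V(r) = 2π (r/d_k)^β d_k² log d_k if d_k ≤ r < a_{k+1}. Define h(r) = 1 + ∫_1^r s/V(s) ds for r ≥ 1. Assume in addition that there are δ > 1 and A ≥ 1 with b_k ≤ A·a_k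 and A^{−1}·c_k^δ ≤ d_k ≤ A·c_k^δ for all k. Then there exists R > e² such that if a_1 ≥ R, there are constants 0 < c ≤ C and r₀ > e such that for all r ≥ r₀: c·log(log r) ≤ h(r) ≤ C·log(log r). -/
/-!
Over one cycle `[a_k, a_{k+1})` the integral of `s / V s` can be computed piece by piece. The
pieces on which `V` is a power law contribute at most
`log (b_k / a_k) / 2π + 1 / (2π (α - 2)) + 1 / (2π (2 - β))`, while the piece `[c_k, d_k)`,
where `V = 2π s² log s`, contributes exactly `(log log d_k - log log c_k) / 2π`. Once `a_1` is
large, condition (3.22) pins `log d_k` between `(δ + 1)/2 · log c_k` and `2δ · log c_k`, and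
`log a_{k+1}` between fixed multiples of `log a_k`. Hence both `h` and `log ∘ log` increase over
every cycle by amounts bounded above and below by positive constants, so `h (a_k)` and
`log log a_k` both grow linearly in `k`, and monotonicity between consecutive `a_k` gives
`h ≃ log log`.
-/

open MeasureTheory Real Set Filter intervalIntegral

theorem exists_le_and_lt_succ_of_tendsto_atTop {a : ℕ → ℝ}
    (htop : Tendsto a atTop atTop) {r : ℝ} (hr : a 0 ≤ r) :
    ∃ k, a k ≤ r ∧ r < a (k + 1) := by
  classical
  have hex : ∃ n, r < a n := (htop.eventually_gt_atTop r).exists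
  have hpos : Nat.find hex ≠ 0 := fun h0 => (Nat.find_spec hex).not_ge (h0 ▸ hr)
  obtain ⟨k, hk⟩ := Nat.exists_eq_succ_of_ne_zero hpos
  refine ⟨k, not_lt.1 (Nat.find_min hex (by omega)), ?_⟩
  rw [← Nat.succ_eq_add_one, ← hk]
  exact Nat.find_spec hex

theorem add_mul_le_of_forall_le_sub_s15 {x : ℕ → ℝ} {m : ℝ} (h : ∀ k, m ≤ x (k + 1) - x k)
    (k : ℕ) : x 0 + k * m ≤ x k := by
  induction k with
  | zero => simp
  | succ k ih => push_cast; linarith [h k]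

theorem le_add_mul_of_forall_sub_le_s15 {x : ℕ → ℝ} {M : ℝ} (h : ∀ k, x (k + 1) - x k ≤ M)
    (k : ℕ) : x k ≤ x 0 + k * M := by
  induction k with
  | zero => simp
  | succ k ih => push_cast; linarith [h k]

theorem tendsto_atTop_of_forall_le_sub_s15 {x : ℕ → ℝ} {m : ℝ} (hm : 0 < m)
    (h : ∀ k, m ≤ x (k + 1) - x k) : Tendsto x atTop atTop :=
  tendsto_atTop_mono (add_mul_le_of_forall_le_sub_s15 h) <| tendsto_atTop_add_const_left _ _ <|
    tendsto_natCast_atTop_atTop.atTop_mul_const hm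

theorem exists_mul_le_and_le_mul_of_increments {u v : ℝ → ℝ} {a : ℕ → ℝ}
    {m₁ M₁ m₂ M₂ : ℝ} (ha : Monotone a) (htop : Tendsto a atTop atTop)
    (hu : MonotoneOn u (Ici (a 0))) (hv : MonotoneOn v (Ici (a 0)))
    (hu₀ : 0 < u (a 0)) (hv₀ : 0 < v (a 0)) (hm₁ : 0 < m₁) (hm₂ : 0 < m₂)
    (hu_step : ∀ k, m₁ ≤ u (a (k + 1)) - u (a k) ∧ u (a (k + 1)) - u (a k) ≤ M₁)
    (hv_step : ∀ k, m₂ ≤ v (a (k + 1)) - v (a k) ∧ v (a (k + 1)) - v (a k) ≤ M₂) :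
    ∃ c C, 0 < c ∧ c ≤ C ∧ ∀ r ≥ a 0, c * v r ≤ u r ∧ u r ≤ C * v r := by
  have hM₂ : 0 < M₂ := hm₂.trans_le ((hv_step 0).1.trans (hv_step 0).2)
  have hM₁ : 0 < M₁ := hm₁.trans_le ((hu_step 0).1.trans (hu_step 0).2)
  set c := min (u (a 0) / (v (a 0) + M₂)) (m₁ / M₂)
  set C := max ((u (a 0) + M₁) / v (a 0)) (M₁ / m₂)
  have hc : 0 < c := lt_min (by positivity) (by positivity)
  refine ⟨c, max c C, hc, le_max_left _ _, fun r hr => ?_⟩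
  obtain ⟨k, hkr, hrk⟩ := exists_le_and_lt_succ_of_tendsto_atTop htop hr
  have mem : ∀ n, a n ∈ Ici (a 0) := fun n => ha n.zero_le
  have hu_lo := add_mul_le_of_forall_le_sub_s15 (x := (u ∘ a)) (fun n => (hu_step n).1) k
  have hu_hi := le_add_mul_of_forall_sub_le_s15 (x := (u ∘ a)) (fun n => (hu_step n).2) (k + 1)
  have hv_lo := add_mul_le_of_forall_le_sub_s15 (x := (v ∘ a)) (fun n => (hv_step n).1) k
  have hv_hi := le_add_mul_of_forall_sub_le_s15 (x := (v ∘ a)) (fun n => (hv_step n).2) (k + 1)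
  have hur := hu (mem k) hr hkr
  have hur' := hu hr (mem (k + 1)) hrk.le
  have hvr := hv (mem k) hr hkr
  have hvr' := hv hr (mem (k + 1)) hrk.le
  have hk : (0 : ℝ) ≤ k := k.cast_nonneg
  simp only [Function.comp_apply, Nat.cast_add, Nat.cast_one] at hu_lo hu_hi hv_lo hv_hi
  constructor
  · have h₁ : c * (v (a 0) + M₂) ≤ u (a 0) :=
      (le_div_iff₀ (by positivity)).1 (min_le_left _ _)
    have h₂ : c * M₂ ≤ m₁ := (le_div_iff₀ hM₂).1 (min_le_right _ _)
    calc c * v r ≤ c * (v (a 0) + (k + 1) * M₂) := by gcongr; linarith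
      _ = c * (v (a 0) + M₂) + k * (c * M₂) := by ring
      _ ≤ u (a 0) + k * m₁ := by gcongr
      _ ≤ u r := by linarith
  · have h₁ : u (a 0) + M₁ ≤ C * v (a 0) := (div_le_iff₀ hv₀).1 (le_max_left _ _)
    have h₂ : M₁ ≤ C * m₂ := (div_le_iff₀ hm₂).1 (le_max_right _ _)
    calc u r ≤ u (a 0) + M₁ + k * M₁ := by linarith
      _ ≤ C * v (a 0) + k * (C * m₂) := by gcongr
      _ = C * (v (a 0) + k * m₂) := by ring
      _ ≤ C * v r := by gcongr; linarith
      _ ≤ max c C * v r :=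
        mul_le_mul_of_nonneg_right (le_max_right c C) (by linarith [mul_nonneg hk hm₂.le])

theorem log_sub_log_mem_of_mul_le_of_le_mul {x y c₁ c₂ : ℝ} (hx : 0 < x) (hc₁ : 0 < c₁)
    (h₁ : c₁ * x ≤ y) (h₂ : y ≤ c₂ * x) :
    log c₁ ≤ log y - log x ∧ log y - log x ≤ log c₂ := by
  have hy : 0 < y := (mul_pos hc₁ hx).trans_le h₁
  have hc₂ : 0 < c₂ := pos_of_mul_pos_left (hy.trans_le h₂) hx.le
  have l₁ := log_le_log (by positivity) h₁
  have l₂ := log_le_log hy h₂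
  rw [log_mul hc₁.ne' hx.ne'] at l₁
  rw [log_mul hc₂.ne' hx.ne'] at l₂
  constructor <;> linarith

theorem log_le_log_add_log_of_le_mul {x y M : ℝ} (hx : 0 < x) (hy : 0 < y) (h : y ≤ M * x) :
    log y ≤ log M + log x := by
  have hM : 0 < M := pos_of_mul_pos_left (hy.trans_le h) hx.le
  exact (log_le_log hy h).trans_eq (log_mul hM.ne' hx.ne')

theorem intervalIntegrable_and_integral_eq_sub_of_eqOn {f g F : ℝ → ℝ} {x y : ℝ}
    (hxy : x ≤ y) (hfg : EqOn f g (Ioo x y)) (hF : ∀ s ∈ Icc x y, HasDerivAt F (g s) s)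
    (hg : ∀ s ∈ Ioo x y, 0 ≤ g s) :
    IntervalIntegrable f volume x y ∧ ∫ s in x..y, f s = F y - F x := by
  rw [← uIoo_of_le hxy] at hfg
  rw [← uIcc_of_le hxy] at hF
  have hg_int : IntervalIntegrable g volume x y :=
    intervalIntegrable_deriv_of_nonneg (fun s hs => (hF s hs).continuousAt.continuousWithinAt)
      (fun s hs => hF s (Ioo_subset_Icc_self hs)) (by rwa [min_eq_left hxy, max_eq_right hxy])
  exact ⟨(intervalIntegrable_congr_uIoo hfg).2 hg_int,
    (integral_congr_uIoo hfg).trans (integral_eq_sub_of_hasDerivAt hF hg_int)⟩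

theorem monotoneOn_integral_of_nonneg {f : ℝ → ℝ} {x₀ : ℝ}
    (hint : ∀ x ≥ x₀, IntervalIntegrable f volume x₀ x) (hf : ∀ x ≥ x₀, 0 ≤ f x) :
    MonotoneOn (fun x => ∫ t in x₀..x, f t) (Ici x₀) := by
  intro x hx y hy hxy
  rw [← sub_nonneg, integral_interval_sub_left (hint y hy) (hint x hx)]
  exact integral_nonneg hxy fun t ht => hf t (hx.trans ht.1)

theorem integral_div_of_eqOn_sq {V : ℝ → ℝ} {x y : ℝ} (hx : 0 < x) (hxy : x ≤ y)
    (hV : ∀ s ∈ Ioo x y, V s = 2 * π * s ^ 2) :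
    IntervalIntegrable (fun s => s / V s) volume x y ∧
      ∫ s in x..y, s / V s = (log y - log x) / (2 * π) := by
  rw [sub_div]
  refine intervalIntegrable_and_integral_eq_sub_of_eqOn (g := fun s => s / (2 * π * s ^ 2))
    (F := fun s => log s / (2 * π)) hxy (fun s hs => by simp only [hV s hs])
    (fun s hs => ?_) (fun s hs => by have := hx.trans hs.1; positivity)
  have hs : 0 < s := hx.trans_le hs.1
  refine ((hasDerivAt_log hs.ne').div_const (2 * π)).congr_deriv ?_
  field_simp

theorem hasDerivAt_rpow_div_const {K b p s : ℝ} (hb : 0 < b) (hs : 0 < s) (hp : p ≠ 2) :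
    HasDerivAt (fun s => (s / b) ^ (2 - p) / ((2 - p) * K))
      (s / (K * (s / b) ^ p * b ^ 2)) s := by
  have hsb : 0 < s / b := div_pos hs hb
  refine ((((hasDerivAt_id s).div_const b).rpow_const (p := 2 - p)
    (Or.inl hsb.ne')).div_const ((2 - p) * K)).congr_deriv ?_
  rw [id, sub_sub, show (2 : ℝ) - (p + 1) = 1 - p by ring, rpow_sub hsb, rpow_one]
  rcases eq_or_ne K 0 with rfl | hK
  · simp
  · field_simp

theorem integral_div_of_eqOn_rpow {V : ℝ → ℝ} {K b y p : ℝ} (hK : 0 < K) (hb : 0 < b)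
    (hby : b ≤ y) (hp : p ≠ 2) (hV : ∀ s ∈ Ioo b y, V s = K * (s / b) ^ p * b ^ 2) :
    IntervalIntegrable (fun s => s / V s) volume b y ∧
      ∫ s in b..y, s / V s = ((y / b) ^ (2 - p) - 1) / ((2 - p) * K) := by
  have := intervalIntegrable_and_integral_eq_sub_of_eqOn (f := fun s => s / V s)
    (g := fun s => s / (K * (s / b) ^ p * b ^ 2))
    (F := fun s => (s / b) ^ (2 - p) / ((2 - p) * K)) hby (fun s hs => by simp only [hV s hs])
    (fun s hs => hasDerivAt_rpow_div_const hb (hb.trans_le hs.1) hp)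
    (fun s hs => by have := hb.trans hs.1; positivity)
  rwa [div_self hb.ne', one_rpow, ← sub_div] at this

theorem integral_div_of_eqOn_sq_mul_log {V : ℝ → ℝ} {x y : ℝ} (hx : 1 < x) (hxy : x ≤ y)
    (hV : ∀ s ∈ Ioo x y, V s = 2 * π * s ^ 2 * log s) :
    IntervalIntegrable (fun s => s / V s) volume x y ∧
      ∫ s in x..y, s / V s = (log (log y) - log (log x)) / (2 * π) := by
  rw [sub_div]
  refine intervalIntegrable_and_integral_eq_sub_of_eqOn
    (g := fun s => s / (2 * π * s ^ 2 * log s)) (F := fun s => log (log s) / (2 * π)) hxy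
    (fun s hs => by simp only [hV s hs]) (fun s hs => ?_) (fun s hs => ?_)
  · have hs : 1 < s := hx.trans_le hs.1
    have hlog := log_pos hs
    refine (((hasDerivAt_log (by positivity)).log hlog.ne').div_const (2 * π)).congr_deriv ?_
    field_simp
  · have hs : 1 < s := hx.trans hs.1
    have := log_pos hs
    positivity

/-- One cycle `[a_k, a_{k+1})` of the construction, with `a = a_k`, ..., `a' = a_{k+1}`. -/
structure VolumeCycle (α β : ℝ) (V : ℝ → ℝ) (a b c d a' : ℝ) : Prop where
  a_le_b : a ≤ b
  b_lt_c : b < c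
  c_le_d : c ≤ d
  d_lt_a' : d < a'
  b_eq : b = c / log c ^ (1 / (α - 2))
  a'_eq : a' = d * log d ^ (1 / (2 - β))
  V_of_a_le : ∀ r, a ≤ r → r < b → V r = 2 * π * r ^ 2
  V_of_b_le : ∀ r, b ≤ r → r < c → V r = 2 * π * (r / b) ^ α * b ^ 2
  V_of_c_le : ∀ r, c ≤ r → r < d → V r = 2 * π * r ^ 2 * log r
  V_of_d_le : ∀ r, d ≤ r → r < a' → V r = 2 * π * (r / d) ^ β * d ^ 2 * log d

namespace VolumeCycle

variable {α β a b c d a' : ℝ} {V : ℝ → ℝ}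

theorem a_lt_a' (hV : VolumeCycle α β V a b c d a') : a < a' :=
  hV.a_le_b.trans_lt (hV.b_lt_c.trans (hV.c_le_d.trans_lt hV.d_lt_a'))

theorem self_div_nonneg (hV : VolumeCycle α β V a b c d a') (ha : 1 < a) {s : ℝ}
    (hs : s ∈ Ico a a') : 0 ≤ s / V s := by
  have hs₀ : 1 < s := ha.trans_le hs.1
  have : 0 < s := by linarith
  rcases lt_or_ge s b with hsb | hbs
  · rw [hV.V_of_a_le s hs.1 hsb]; positivity
  rcases lt_or_ge s c with hsc | hcs
  · have : 0 < b := by linarith [hV.a_le_b]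
    rw [hV.V_of_b_le s hbs hsc]; positivity
  rcases lt_or_ge s d with hsd | hds
  · have := log_pos hs₀
    rw [hV.V_of_c_le s hcs hsd]; positivity
  · have hd : 1 < d := by linarith [hV.a_le_b, hV.b_lt_c, hV.c_le_d]
    have := log_pos hd
    have : 0 < d := by linarith
    rw [hV.V_of_d_le s hds hs.2]; positivity

theorem div_rpow_eq_log (hV : VolumeCycle α β V a b c d a') (hd : 1 < d) (hβ : β ≠ 2) :
    (a' / d) ^ (2 - β) = log d := by
  rw [hV.a'_eq, mul_div_cancel_left₀ _ (by linarith), one_div,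
    rpow_inv_rpow (log_pos hd).le (sub_ne_zero.2 hβ.symm)]

theorem integral_eq (hV : VolumeCycle α β V a b c d a') (ha : 1 < a) (hα : α ≠ 2)
    (hβ : β ≠ 2) :
    IntervalIntegrable (fun s => s / V s) volume a a' ∧
      ∫ s in a..a', s / V s = (log b - log a) / (2 * π) +
        ((c / b) ^ (2 - α) - 1) / ((2 - α) * (2 * π)) +
        (log (log d) - log (log c)) / (2 * π) +
        (log d - 1) / ((2 - β) * (2 * π * log d)) := by
  have hb : 0 < b := by linarith [hV.a_le_b]
  have hc : 1 < c := by linarith [hV.a_le_b, hV.b_lt_c]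
  have hd : 1 < d := hc.trans_le hV.c_le_d
  obtain ⟨i₁, e₁⟩ := integral_div_of_eqOn_sq (by linarith) hV.a_le_b
    (fun s hs => hV.V_of_a_le s hs.1.le hs.2)
  obtain ⟨i₂, e₂⟩ := integral_div_of_eqOn_rpow (by positivity) hb hV.b_lt_c.le hα
    (fun s hs => hV.V_of_b_le s hs.1.le hs.2)
  obtain ⟨i₃, e₃⟩ := integral_div_of_eqOn_sq_mul_log hc hV.c_le_d
    (fun s hs => hV.V_of_c_le s hs.1.le hs.2)
  obtain ⟨i₄, e₄⟩ := integral_div_of_eqOn_rpow (K := 2 * π * log d)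
    (by have := log_pos hd; positivity) (by linarith) hV.d_lt_a'.le hβ
    (fun s hs => (hV.V_of_d_le s hs.1.le hs.2).trans (by ring))
  refine ⟨i₁.trans (i₂.trans (i₃.trans i₄)), ?_⟩
  rw [← integral_add_adjacent_intervals i₁ (i₂.trans (i₃.trans i₄)),
    ← integral_add_adjacent_intervals i₂ (i₃.trans i₄),
    ← integral_add_adjacent_intervals i₃ i₄, e₁, e₂, e₃, e₄,
    hV.div_rpow_eq_log hd hβ]
  ring

theorem integral_bounds (hV : VolumeCycle α β V a b c d a') (ha : 1 < a) (hα : 2 < α)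
    (hβ : β < 2) :
    IntervalIntegrable (fun s => s / V s) volume a a' ∧
      (log (log d) - log (log c)) / (2 * π) ≤ ∫ s in a..a', s / V s ∧
      ∫ s in a..a', s / V s ≤ (log b - log a + (log (log d) - log (log c)) +
        (α - 2)⁻¹ + (2 - β)⁻¹) / (2 * π) := by
  obtain ⟨hint, heq⟩ := hV.integral_eq ha hα.ne' hβ.ne
  have hb : 0 < b := by linarith [hV.a_le_b]
  have hd : 1 < d := by linarith [hV.a_le_b, hV.b_lt_c, hV.c_le_d]
  set t := (c / b) ^ (2 - α)
  have ht : t ≤ 1 := rpow_le_one_of_one_le_of_nonpos ((one_le_div hb).2 hV.b_lt_c.le)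
    (by linarith)
  have ht₀ : 0 ≤ t := rpow_nonneg (div_pos (hb.trans hV.b_lt_c) hb).le _
  have hL : 1 ≤ log d := hV.div_rpow_eq_log hd hβ.ne ▸
    one_le_rpow ((one_le_div (by linarith)).2 hV.d_lt_a'.le) (by linarith)
  have hsecond : (t - 1) / ((2 - α) * (2 * π)) = (1 - t) * ((α - 2)⁻¹ / (2 * π)) := by
    have : α - 2 ≠ 0 := by linarith
    rw [← neg_sub α 2, ← neg_sub 1 t]
    field_simp
  have hfourth : (log d - 1) / ((2 - β) * (2 * π * log d)) =
      (1 - (log d)⁻¹) * ((2 - β)⁻¹ / (2 * π)) := by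
    have : 2 - β ≠ 0 := by linarith
    have : log d ≠ 0 := by linarith
    field_simp
  have hlog : 0 ≤ (log b - log a) / (2 * π) :=
    div_nonneg (sub_nonneg.2 (log_le_log (by linarith) hV.a_le_b)) (by positivity)
  have hC₂ : 0 ≤ (α - 2)⁻¹ / (2 * π) := by have := inv_pos.2 (sub_pos.2 hα); positivity
  have hC₄ : 0 ≤ (2 - β)⁻¹ / (2 * π) := by have := inv_pos.2 (sub_pos.2 hβ); positivity
  have hL₀ : 0 ≤ (log d)⁻¹ := inv_nonneg.2 (by linarith)
  have hL₁ : (log d)⁻¹ ≤ 1 := inv_le_one_of_one_le₀ hL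
  rw [heq, hsecond, hfourth]
  refine ⟨hint, ?_, ?_⟩
  · nlinarith [mul_nonneg (sub_nonneg.2 ht) hC₂, mul_nonneg (sub_nonneg.2 hL₁) hC₄]
  · rw [add_div, add_div, add_div, sub_div]
    nlinarith [mul_le_of_le_one_left hC₂ (by linarith : 1 - t ≤ 1),
      mul_le_of_le_one_left hC₄ (by linarith : 1 - (log d)⁻¹ ≤ 1)]

theorem log_b_eq (hV : VolumeCycle α β V a b c d a') (hc : 1 < c) :
    log b = log c - (α - 2)⁻¹ * log (log c) := by
  rw [hV.b_eq, log_div (by linarith) (rpow_pos_of_pos (log_pos hc) _).ne',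
    log_rpow (log_pos hc), one_div]

theorem log_a'_eq (hV : VolumeCycle α β V a b c d a') (hd : 1 < d) :
    log a' = log d + (2 - β)⁻¹ * log (log d) := by
  rw [hV.a'_eq, log_mul (by linarith) (rpow_pos_of_pos (log_pos hd) _).ne',
    log_rpow (log_pos hd), one_div]

theorem log_d_mem {δ M : ℝ} (hV : VolumeCycle α β V a b c d a') (ha : 1 < a) (hδ : 1 < δ)
    (hdc : M⁻¹ * c ^ δ ≤ d ∧ d ≤ M * c ^ δ) (hMa : 2 * log M ≤ (δ - 1) * log a) :
    (δ + 1) / 2 * log c ≤ log d ∧ log d ≤ 2 * δ * log c := by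
  have hc : 1 < c := ha.trans_le (hV.a_le_b.trans hV.b_lt_c.le)
  have hd : 0 < d := by linarith [hV.c_le_d]
  have hcδ : 0 < c ^ δ := rpow_pos_of_pos (by linarith) δ
  have hM : 0 < M := pos_of_mul_pos_left (hd.trans_le hdc.2) hcδ.le
  have h₁ := log_le_log_add_log_of_le_mul hd hcδ ((inv_mul_le_iff₀ hM).1 hdc.1)
  have h₂ := log_le_log_add_log_of_le_mul hcδ hd hdc.2
  rw [log_rpow (by linarith)] at h₁ h₂
  have hLc : (δ - 1) * log a ≤ (δ - 1) * log c :=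
    mul_le_mul_of_nonneg_left (log_le_log (by linarith) (hV.a_le_b.trans hV.b_lt_c.le))
      (by linarith)
  have := log_pos hc
  constructor <;> nlinarith

theorem log_a'_mem {δ M : ℝ} (hV : VolumeCycle α β V a b c d a') (ha : exp 1 ≤ a)
    (hα : 2 < α) (hβ : β < 2) (hδ : 1 < δ) (hbM : b ≤ M * a)
    (hdc : M⁻¹ * c ^ δ ≤ d ∧ d ≤ M * c ^ δ) (hMa : 2 * log M ≤ (δ - 1) * log a)
    (hlog : ∀ t ≥ log a, log t ≤ (α - 2) / 2 * t) :
    (δ + 1) / 2 * log a ≤ log a' ∧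
      log a' ≤ 2 * δ * (δ + 1) * (1 + (2 - β)⁻¹) * log a := by
  have ha₀ : 0 < a := (exp_pos 1).trans_le ha
  have hLa : 1 ≤ log a := (le_log_iff_exp_le ha₀).2 ha
  have ha₁ : 1 < a := by linarith [add_one_le_exp 1]
  have hc : 1 < c := ha₁.trans_le (hV.a_le_b.trans hV.b_lt_c.le)
  have hd : 1 < d := hc.trans_le hV.c_le_d
  have hLc : log a ≤ log c := log_le_log ha₀ (hV.a_le_b.trans hV.b_lt_c.le)
  obtain ⟨hdc₁, hdc₂⟩ := hV.log_d_mem ha₁ hδ hdc hMa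
  have hbM' := log_le_log_add_log_of_le_mul ha₀ (by linarith [hV.a_le_b]) hbM
  have hllc : (α - 2)⁻¹ * log (log c) ≤ log c / 2 := by
    rw [inv_mul_le_iff₀ (by linarith)]
    linarith [hlog _ hLc]
  have hca : log c ≤ (δ + 1) * log a := by linarith [hV.log_b_eq hc]
  have hlld₀ : 0 ≤ log (log d) := log_nonneg (by linarith [log_le_log (by linarith) hV.c_le_d])
  have hβ' : 0 < (2 - β)⁻¹ := inv_pos.2 (by linarith)
  rw [hV.log_a'_eq hd]
  constructor
  · nlinarith [mul_nonneg hβ'.le hlld₀]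
  · calc log d + (2 - β)⁻¹ * log (log d) ≤ (1 + (2 - β)⁻¹) * log d := by
          nlinarith [mul_le_mul_of_nonneg_left (log_le_self (by linarith) : log (log d) ≤ log d)
            hβ'.le]
      _ ≤ (1 + (2 - β)⁻¹) * (2 * δ * ((δ + 1) * log a)) := by
          gcongr
          exact hdc₂.trans (by gcongr)
      _ = _ := by ring

theorem integral_mem {δ M : ℝ} (hV : VolumeCycle α β V a b c d a') (ha : 1 < a)
    (hα : 2 < α) (hβ : β < 2) (hδ : 1 < δ) (hbM : b ≤ M * a)
    (hdc : M⁻¹ * c ^ δ ≤ d ∧ d ≤ M * c ^ δ) (hMa : 2 * log M ≤ (δ - 1) * log a) :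
    log ((δ + 1) / 2) / (2 * π) ≤ ∫ s in a..a', s / V s ∧
      ∫ s in a..a', s / V s ≤
        (log M + log (2 * δ) + (α - 2)⁻¹ + (2 - β)⁻¹) / (2 * π) := by
  obtain ⟨-, hlo, hhi⟩ := hV.integral_bounds ha hα hβ
  obtain ⟨hdc₁, hdc₂⟩ := hV.log_d_mem ha hδ hdc hMa
  have hc : 1 < c := ha.trans_le (hV.a_le_b.trans hV.b_lt_c.le)
  obtain ⟨hd₁, hd₂⟩ :=
    log_sub_log_mem_of_mul_le_of_le_mul (log_pos hc) (by linarith) hdc₁ hdc₂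
  have hba := log_le_log_add_log_of_le_mul (by linarith) (by linarith [hV.a_le_b]) hbM
  exact ⟨(div_le_div_of_nonneg_right hd₁ two_pi_pos.le).trans hlo,
    hhi.trans (div_le_div_of_nonneg_right (by linarith) two_pi_pos.le)⟩

theorem log_log_sub_mem {δ M : ℝ} (hV : VolumeCycle α β V a b c d a') (ha : exp 1 ≤ a)
    (hα : 2 < α) (hβ : β < 2) (hδ : 1 < δ) (hbM : b ≤ M * a)
    (hdc : M⁻¹ * c ^ δ ≤ d ∧ d ≤ M * c ^ δ) (hMa : 2 * log M ≤ (δ - 1) * log a)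
    (hlog : ∀ t ≥ log a, log t ≤ (α - 2) / 2 * t) :
    log ((δ + 1) / 2) ≤ log (log a') - log (log a) ∧
      log (log a') - log (log a) ≤ log (2 * δ * (δ + 1) * (1 + (2 - β)⁻¹)) := by
  obtain ⟨h₁, h₂⟩ := hV.log_a'_mem ha hα hβ hδ hbM hdc hMa hlog
  exact log_sub_log_mem_of_mul_le_of_le_mul
    (log_pos ((one_lt_exp_iff.2 one_pos).trans_le ha)) (by linarith) h₁ h₂

end VolumeCycle

section Cycles

variable {α β : ℝ} {V : ℝ → ℝ} {a b c d : ℕ → ℝ}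

theorem monotone_of_volumeCycle
    (hV : ∀ k, VolumeCycle α β V (a k) (b k) (c k) (d k) (a (k + 1))) : Monotone a :=
  monotone_nat_of_le_succ fun k => (hV k).a_lt_a'.le

theorem intervalIntegrable_div_of_volumeCycle (hα : α ≠ 2) (hβ : β ≠ 2)
    (hV₀ : ∀ r, 0 < r → r < a 0 → V r = 2 * π * r ^ 2)
    (hV : ∀ k, VolumeCycle α β V (a k) (b k) (c k) (d k) (a (k + 1))) (ha₀ : 1 < a 0)
    (k : ℕ) :
    IntervalIntegrable (fun s => s / V s) volume 1 (a k) := by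
  induction k with
  | zero => exact (integral_div_of_eqOn_sq one_pos ha₀.le
      fun s hs => hV₀ s (by linarith [hs.1]) hs.2).1
  | succ k ih => exact ih.trans ((hV k).integral_eq
      (ha₀.trans_le (monotone_of_volumeCycle hV k.zero_le)) hα hβ).1

theorem monotoneOn_integral_div_of_volumeCycle (hα : α ≠ 2) (hβ : β ≠ 2)
    (hV₀ : ∀ r, 0 < r → r < a 0 → V r = 2 * π * r ^ 2)
    (hV : ∀ k, VolumeCycle α β V (a k) (b k) (c k) (d k) (a (k + 1)))
    (ha₀ : 1 < a 0) (htop : Tendsto a atTop atTop) :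
    MonotoneOn (fun r => ∫ s in (1 : ℝ)..r, s / V s) (Ici 1) := by
  refine monotoneOn_integral_of_nonneg (fun r hr => ?_) (fun s hs => ?_)
  · obtain ⟨k, hk⟩ := (htop.eventually_ge_atTop r).exists
    exact (intervalIntegrable_div_of_volumeCycle hα hβ hV₀ hV ha₀ k).mono_set
      (uIcc_subset_uIcc left_mem_uIcc (by rw [uIcc_of_le (hr.trans hk)]; exact ⟨hr, hk⟩))
  rcases lt_or_ge s (a 0) with hs₀ | hs₀
  · rw [hV₀ s (by linarith) hs₀]; positivity
  · obtain ⟨k, hk, hk'⟩ := exists_le_and_lt_succ_of_tendsto_atTop htop hs₀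
    exact (hV k).self_div_nonneg (ha₀.trans_le (monotone_of_volumeCycle hV k.zero_le))
      ⟨hk, hk'⟩

theorem exists_bounds_integral_div_of_volumeCycle {δ M : ℝ} (hα : 2 < α) (hβ : β < 2)
    (hδ : 1 < δ) (hV₀ : ∀ r, 0 < r → r < a 0 → V r = 2 * π * r ^ 2)
    (hV : ∀ k, VolumeCycle α β V (a k) (b k) (c k) (d k) (a (k + 1)))
    (hbM : ∀ k, b k ≤ M * a k) (hdc : ∀ k, M⁻¹ * c k ^ δ ≤ d k ∧ d k ≤ M * c k ^ δ)
    (ha₀ : exp 1 < a 0) (hMa : 2 * log M ≤ (δ - 1) * log (a 0))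
    (hlog : ∀ t ≥ log (a 0), log t ≤ (α - 2) / 2 * t) :
    ∃ c₁ c₂, 0 < c₁ ∧ c₁ ≤ c₂ ∧ ∀ r ≥ a 0,
      c₁ * log (log r) ≤ 1 + ∫ s in (1 : ℝ)..r, s / V s ∧
        1 + ∫ s in (1 : ℝ)..r, s / V s ≤ c₂ * log (log r) := by
  have hmono := monotone_of_volumeCycle hV
  have ha (k : ℕ) : exp 1 < a k := ha₀.trans_le (hmono k.zero_le)
  have ha₁ (k : ℕ) : 1 < a k := (one_lt_exp_iff.2 one_pos).trans (ha k)
  have hLa (k : ℕ) : log (a 0) ≤ log (a k) :=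
    log_le_log (by linarith [ha₁ 0]) (hmono k.zero_le)
  have hMa' (k : ℕ) : 2 * log M ≤ (δ - 1) * log (a k) :=
    hMa.trans (mul_le_mul_of_nonneg_left (hLa k) (by linarith))
  have hv_step (k : ℕ) := (hV k).log_log_sub_mem (ha k).le hα hβ hδ (hbM k) (hdc k) (hMa' k)
    fun t ht => hlog t ((hLa k).trans ht)
  have hδ' : 0 < log ((δ + 1) / 2) := log_pos (by linarith)
  have htop : Tendsto a atTop atTop := by
    refine tendsto_atTop_mono (fun k => ?_) (tendsto_atTop_of_forall_le_sub_s15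
      (x := fun k => log (log (a k))) hδ' fun k => (hv_step k).1)
    exact (log_le_self (log_pos (ha₁ k)).le).trans (log_le_self (by linarith [ha₁ k]))
  have hint := intervalIntegrable_div_of_volumeCycle hα.ne' hβ.ne hV₀ hV (ha₁ 0)
  have hu := monotoneOn_integral_div_of_volumeCycle hα.ne' hβ.ne hV₀ hV (ha₁ 0) htop
  have hIci : Ici (a 0) ⊆ Ici 1 := Ici_subset_Ici.2 (ha₁ 0).le
  refine exists_mul_le_and_le_mul_of_increments (u := fun r => 1 + ∫ s in (1 : ℝ)..r, s / V s)
    (v := fun r => log (log r)) (m₁ := log ((δ + 1) / 2) / (2 * π))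
    (M₁ := (log M + log (2 * δ) + (α - 2)⁻¹ + (2 - β)⁻¹) / (2 * π)) hmono htop
    (fun x hx y hy hxy => (add_le_add_iff_left 1).2 (hu (hIci hx) (hIci hy) hxy))
    (fun x hx y hy hxy => log_le_log (log_pos ((ha₁ 0).trans_le hx))
      (log_le_log (zero_lt_one.trans ((ha₁ 0).trans_le hx)) hxy))
    ?_ (log_pos ((lt_log_iff_exp_lt (by linarith [ha₁ 0])).2 ha₀)) (by positivity) hδ'
    (fun k => ?_) hv_step
  · have h := hu self_mem_Ici (hIci self_mem_Ici) (ha₁ 0).le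
    simp only [integral_same] at h
    linarith
  · rw [add_sub_add_left_eq_sub, integral_interval_sub_left (hint (k + 1)) (hint k)]
    exact (hV k).integral_mem (ha₁ k) hα hβ hδ (hbM k) (hdc k) (hMa' k)

end Cycles

theorem stmt_15_general (α β δ M : ℝ) (hα : 2 < α) (hβ2 : β < 2)
    (hδ : 1 < δ) :
    ∃ R : ℝ, Real.exp 2 < R ∧
      ∀ (A B Cs D : ℕ → ℝ) (V h : ℝ → ℝ),
        Real.exp 2 < A 1 → R ≤ A 1 →
        (∀ k ≥ 1, A k ≤ B k ∧ B k < Cs k ∧ Cs k ≤ D k ∧ D k < A (k + 1)) →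
        (∀ k ≥ 1, B k = Cs k / Real.log (Cs k) ^ ((1:ℝ) / (α - 2))) →
        (∀ k ≥ 1, A (k + 1) = D k * Real.log (D k) ^ ((1:ℝ) / (2 - β))) →
        (∀ r : ℝ, 0 < r → r < A 1 → V r = 2 * Real.pi * r ^ 2) →
        (∀ k ≥ 1, ∀ r : ℝ, A k ≤ r → r < B k → V r = 2 * Real.pi * r ^ 2) →
        (∀ k ≥ 1, ∀ r : ℝ, B k ≤ r → r < Cs k →
          V r = 2 * Real.pi * (r / B k) ^ α * B k ^ 2) →
        (∀ k ≥ 1, ∀ r : ℝ, Cs k ≤ r → r < D k →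
          V r = 2 * Real.pi * r ^ 2 * Real.log r) →
        (∀ k ≥ 1, ∀ r : ℝ, D k ≤ r → r < A (k + 1) →
          V r = 2 * Real.pi * (r / D k) ^ β * D k ^ 2 * Real.log (D k)) →
        (∀ r : ℝ, 1 ≤ r → h r = 1 + ∫ s in (1:ℝ)..r, s / V s) →
        (∀ k ≥ 1, B k ≤ M * A k) →
        (∀ k ≥ 1, M⁻¹ * Cs k ^ δ ≤ D k ∧ D k ≤ M * Cs k ^ δ) →
        ∃ c C r₀ : ℝ, 0 < c ∧ c ≤ C ∧ Real.exp 1 < r₀ ∧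
          ∀ r ≥ r₀,
            c * Real.log (Real.log r) ≤ h r ∧
            h r ≤ C * Real.log (Real.log r) := by
  have hlog : ∀ᶠ t in atTop, log t ≤ (α - 2) / 2 * t := by
    filter_upwards [isLittleO_log_id_atTop.bound (by linarith : 0 < (α - 2) / 2),
      eventually_ge_atTop 0] with t ht ht₀
    simpa [abs_of_nonneg ht₀] using (le_abs_self _).trans ht
  obtain ⟨Λ, hΛ⟩ := hlog.exists_forall_of_atTop
  -- `log a_1 ≥ 2 log M / (δ - 1)` lets the factor `M` of (3.22) be absorbed into `c_k ^ δ`.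
  refine ⟨exp (max 3 (max Λ (2 * log M / (δ - 1)))),
    exp_lt_exp.2 ((by norm_num : (2 : ℝ) < 3).trans_le (le_max_left _ _)), ?_⟩
  intro A B Cs D V h hA₁ hRA hchain hB hA hV₀ hV₁ hV₂ hV₃ hV₄ hh hBA hDC
  have hlogA : max 3 (max Λ (2 * log M / (δ - 1))) ≤ log (A 1) :=
    (le_log_iff_exp_le ((exp_pos 2).trans hA₁)).2 hRA
  have hexpA : exp 1 < A 1 := (exp_lt_exp.2 one_lt_two).trans hA₁
  have hcycle (k : ℕ) :
      VolumeCycle α β V (A (k + 1)) (B (k + 1)) (Cs (k + 1)) (D (k + 1)) (A (k + 1 + 1)) :=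
    have hk : k + 1 ≥ 1 := Nat.le_add_left 1 k
    ⟨(hchain _ hk).1, (hchain _ hk).2.1, (hchain _ hk).2.2.1, (hchain _ hk).2.2.2, hB _ hk,
      hA _ hk, hV₁ _ hk, hV₂ _ hk, hV₃ _ hk, hV₄ _ hk⟩
  obtain ⟨c, C, hc, hcC, hbounds⟩ := exists_bounds_integral_div_of_volumeCycle
    (a := fun k => A (k + 1)) hα hβ2 hδ hV₀ hcycle (fun k => hBA _ (Nat.le_add_left 1 k))
    (fun k => hDC _ (Nat.le_add_left 1 k)) hexpA
    ((div_le_iff₀' (by linarith)).1 ((le_max_right _ _).trans ((le_max_right _ _).trans hlogA)))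
    (fun t ht => hΛ t ((le_max_left _ _).trans ((le_max_right _ _).trans (hlogA.trans ht))))
  refine ⟨c, C, A 1, hc, hcC, hexpA, fun r hr => ?_⟩
  rw [hh r (by linarith [add_one_le_exp 1])]
  exact hbounds r hr

/-- Lemma 3.2 of the paper: under the additional comparability
`b_k ≤ M·a_k`, `M⁻¹·c_k^δ ≤ d_k ≤ M·c_k^δ` with `δ > 1` (condition (3.22)),
if `a_1` is large enough then `h(r) ≃ log log r` for large `r`. -/
theorem stmt_15 (α β δ M : ℝ) (hα : 2 < α) (hβ0 : 0 < β) (hβ2 : β < 2)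
    (hδ : 1 < δ) (hM : 1 ≤ M) :
    ∃ R : ℝ, Real.exp 2 < R ∧
      ∀ (A B Cs D : ℕ → ℝ) (V h : ℝ → ℝ),
        Real.exp 2 < A 1 → R ≤ A 1 →
        (∀ k ≥ 1, A k ≤ B k ∧ B k < Cs k ∧ Cs k ≤ D k ∧ D k < A (k + 1)) →
        (∀ k ≥ 1, B k = Cs k / Real.log (Cs k) ^ ((1:ℝ) / (α - 2))) →
        (∀ k ≥ 1, A (k + 1) = D k * Real.log (D k) ^ ((1:ℝ) / (2 - β))) →
        (∀ r : ℝ, 0 < r → r < A 1 → V r = 2 * Real.pi * r ^ 2) →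
        (∀ k ≥ 1, ∀ r : ℝ, A k ≤ r → r < B k → V r = 2 * Real.pi * r ^ 2) →
        (∀ k ≥ 1, ∀ r : ℝ, B k ≤ r → r < Cs k →
          V r = 2 * Real.pi * (r / B k) ^ α * B k ^ 2) →
        (∀ k ≥ 1, ∀ r : ℝ, Cs k ≤ r → r < D k →
          V r = 2 * Real.pi * r ^ 2 * Real.log r) →
        (∀ k ≥ 1, ∀ r : ℝ, D k ≤ r → r < A (k + 1) →
          V r = 2 * Real.pi * (r / D k) ^ β * D k ^ 2 * Real.log (D k)) →
        (∀ r : ℝ, 1 ≤ r → h r = 1 + ∫ s in (1:ℝ)..r, s / V s) →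
        (∀ k ≥ 1, B k ≤ M * A k) →
        (∀ k ≥ 1, M⁻¹ * Cs k ^ δ ≤ D k ∧ D k ≤ M * Cs k ^ δ) →
        ∃ c C r₀ : ℝ, 0 < c ∧ c ≤ C ∧ Real.exp 1 < r₀ ∧
          ∀ r ≥ r₀,
            c * Real.log (Real.log r) ≤ h r ∧
            h r ≤ C * Real.log (Real.log r) :=
  stmt_15_general α β δ M hα hβ2 hδ
end
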